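/- arXiv:2306.15727 — 7 statements merged into one kernel-verified Lean document; each statement's English description precedes it below -/
import Mathlib

section
/- For all integers a, b ≥ 1, Σ_{r=0}^{a} C(a+b−r, b) 2^r + Σ_{r=0}^{b} C(a+b−r, a) 2^r = 2^{a+b+1}, where C(n,k) denotes the binomial coefficient. -/
/-!
Write `S a b = ∑_{r ≤ a} C(a+b-r, b) 2^r`. Pascal's rule gives
`S (a+1) (b+1) = S a (b+1) + S (a+1) b`, so `T a b = S a b + S b a` satisfies the same recursion,
which also holds for `2^(a+b+1)` (it doubles when `a + b` grows by one). On the boundary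
`S 0 b = 1` and `S a 0 = 2^(a+1) - 1` is a geometric sum, so `T a 0 = 2^(a+1)`, and induction
finishes the proof.
-/

open Finset

def weightedChooseSum (a b : ℕ) : ℕ := ∑ r ∈ range (a + 1), (a + b - r).choose b * 2 ^ r

namespace weightedChooseSum

lemma zero_left (b : ℕ) : weightedChooseSum 0 b = 1 := by
  simp [weightedChooseSum]

lemma zero_right_add_one (a : ℕ) : weightedChooseSum a 0 + 1 = 2 ^ (a + 1) := by
  simp only [weightedChooseSum, Nat.choose_zero_right, one_mul,
    Nat.geomSum_eq le_rfl, Nat.add_one_sub_one, Nat.div_one]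
  exact Nat.sub_add_cancel Nat.one_le_two_pow

lemma succ_succ (a b : ℕ) :
    weightedChooseSum (a + 1) (b + 1) = weightedChooseSum a (b + 1) + weightedChooseSum (a + 1) b := by
  have pascal : ∀ r ∈ range (a + 1 + 1), (a + 1 + (b + 1) - r).choose (b + 1) * 2 ^ r =
      (a + (b + 1) - r).choose (b + 1) * 2 ^ r + (a + 1 + b - r).choose b * 2 ^ r := by
    intro r hr
    have hr : r ≤ a + 1 := Nat.lt_succ_iff.mp (mem_range.mp hr)
    rw [show a + 1 + (b + 1) - r = a + 1 + b - r + 1 by omega,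
      show a + (b + 1) - r = a + 1 + b - r by omega, Nat.choose_succ_succ']
    ring
  have top : ∑ r ∈ range (a + 1 + 1), (a + (b + 1) - r).choose (b + 1) * 2 ^ r =
      weightedChooseSum a (b + 1) := by
    rw [sum_range_succ, show a + (b + 1) - (a + 1) = b by omega, Nat.choose_succ_self, zero_mul,
      add_zero, weightedChooseSum]
  rw [weightedChooseSum, sum_congr rfl pascal, sum_add_distrib, top]
  rfl

theorem add_swap (a b : ℕ) : weightedChooseSum a b + weightedChooseSum b a = 2 ^ (a + b + 1) := by
  induction a generalizing b with
  | zero =>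
    rw [zero_left, add_comm, zero_right_add_one, zero_add]
  | succ a iha =>
    induction b with
    | zero => rw [zero_left, zero_right_add_one]
    | succ b ihb =>
      rw [succ_succ, succ_succ, show a + 1 + (b + 1) + 1 = (a + 1 + b + 1) + 1 by omega, pow_succ,
        ← ihb, mul_two]
      have := iha (b + 1)
      rw [show a + (b + 1) + 1 = a + 1 + b + 1 by omega] at this
      omega

end weightedChooseSum

theorem choose_sum_identity_general (a b : ℕ) :
    (∑ r ∈ Finset.range (a + 1), (a + b - r).choose b * 2 ^ r) +
      (∑ r ∈ Finset.range (b + 1), (a + b - r).choose a * 2 ^ r) = 2 ^ (a + b + 1) := by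
  simpa only [weightedChooseSum, add_comm b a] using weightedChooseSum.add_swap a b

/-- A binomial identity: for `a, b ≥ 1`,
`Σ_{r=0}^{a} C(a+b−r, b) 2^r + Σ_{r=0}^{b} C(a+b−r, a) 2^r = 2^{a+b+1}`. -/
theorem choose_sum_identity (a b : ℕ) (ha : 1 ≤ a) (hb : 1 ≤ b) :
    (∑ r ∈ Finset.range (a + 1), (a + b - r).choose b * 2 ^ r) +
      (∑ r ∈ Finset.range (b + 1), (a + b - r).choose a * 2 ^ r) = 2 ^ (a + b + 1) :=
  choose_sum_identity_general a b
end

section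
/- Let D = {z ∈ ℂ : |z| ≤ 1} be the closed unit disk and A the Lebesgue (area) measure on ℂ. For every integer n ≥ 1, (1/π^n) ∫_{D^n} max{log|x_1|, …, log|x_n|} dA(x_1)⋯dA(x_n) = −1/(2n). -/
/-!
By the layer-cake formula, `∫_{Dⁿ} -max log|xᵢ| = ∫₀^∞ A({x ∈ Dⁿ : max log|xᵢ| < -t}) dt`.
For `t ≥ 0` that superlevel set is the product of `n` punctured disks of radius `e^{-t}`, of
volume `πⁿ e^{-2nt}`, and `∫₀^∞ πⁿ e^{-2nt} dt = πⁿ / (2n)`.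
-/

open MeasureTheory Set Metric Real

section MaxLogNorm

variable {ι : Type*} [Fintype ι] (hι : (Finset.univ : Finset ι).Nonempty)

theorem measurable_sup'_log_norm :
    Measurable fun x : ι → ℂ => Finset.univ.sup' hι fun i => log ‖x i‖ := by
  convert Finset.measurable_sup' hι fun i _ =>
    (measurable_pi_apply (X := fun _ : ι => ℂ) i).norm.log using 1
  ext x
  simp

theorem ae_restrict_pi_closedBall_neg_sup'_log_norm_nonneg :
    0 ≤ᵐ[volume.restrict (univ.pi fun _ : ι => closedBall (0 : ℂ) 1)]
      fun x => -Finset.univ.sup' hι fun i => log ‖x i‖ := by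
  filter_upwards [ae_restrict_mem (.univ_pi fun _ => measurableSet_closedBall)] with x hx
  exact neg_nonneg.mpr <| Finset.sup'_le _ _ fun i _ =>
    log_nonpos (norm_nonneg _) (by simpa using hx i (mem_univ i))

theorem setOf_sup'_log_norm_lt {s : ℝ} (hs : s ≤ 0) :
    {x : ι → ℂ | Finset.univ.sup' hι (fun i => log ‖x i‖) < s} =
      univ.pi fun _ => ball (0 : ℂ) (exp s) \ {0} := by
  ext x
  simp only [mem_ofPred_eq, Finset.sup'_lt_iff, Finset.mem_univ, true_implies, mem_pi,
    mem_univ, mem_sdiff, mem_ball_zero_iff, mem_singleton_iff]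
  refine forall_congr' fun i => ?_
  by_cases hxi : x i = 0
  · simp [hxi, hs]
  · rw [log_lt_iff_lt_exp (norm_pos_iff.mpr hxi)]
    simp [hxi]

theorem volume_pi_ball_sdiff_zero {r : ℝ} (hr : 0 ≤ r) :
    volume (univ.pi fun _ : ι => ball (0 : ℂ) r \ {0}) =
      ENNReal.ofReal ((π * r ^ 2) ^ Fintype.card ι) := by
  rw [volume_pi_pi, Finset.prod_const, Finset.card_univ, measure_sdiff_null (measure_singleton 0),
    Complex.volume_ball, ← ENNReal.ofReal_pow hr, ← ENNReal.ofReal_coe_nnreal,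
    ← ENNReal.ofReal_mul (by positivity), ← ENNReal.ofReal_pow (by positivity),
    NNReal.coe_real_pi, mul_comm]

theorem volume_setOf_sup'_log_norm_lt_inter_pi_closedBall {t : ℝ} (ht : 0 ≤ t) :
    volume ({x : ι → ℂ | Finset.univ.sup' hι (fun i => log ‖x i‖) < -t} ∩
        univ.pi fun _ => closedBall (0 : ℂ) 1) =
      ENNReal.ofReal (π ^ Fintype.card ι * exp (-(2 * Fintype.card ι) * t)) := by
  have hsub : (univ.pi fun _ : ι => ball (0 : ℂ) (exp (-t)) \ {0}) ⊆
      univ.pi fun _ => closedBall (0 : ℂ) 1 :=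
    pi_mono fun _ _ => sdiff_subset.trans <| ball_subset_closedBall.trans <|
      closedBall_subset_closedBall <| exp_le_one_iff.mpr (by linarith)
  rw [setOf_sup'_log_norm_lt hι (by linarith), inter_eq_left.mpr hsub,
    volume_pi_ball_sdiff_zero (exp_nonneg _), mul_pow, ← pow_mul, ← exp_nat_mul]
  congr 3
  push_cast
  ring

theorem integral_exp_neg_mul_Ioi_zero {a : ℝ} (ha : 0 < a) :
    ∫ t in Ioi (0 : ℝ), exp (-a * t) = a⁻¹ := by
  rw [integral_exp_mul_Ioi (neg_neg_of_pos ha)]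
  simp

theorem lintegral_pi_closedBall_neg_sup'_log_norm :
    ∫⁻ x in univ.pi (fun _ : ι => closedBall (0 : ℂ) 1),
        ENNReal.ofReal (-Finset.univ.sup' hι fun i => log ‖x i‖) =
      ENNReal.ofReal (π ^ Fintype.card ι / (2 * Fintype.card ι)) := by
  have hg := measurable_sup'_log_norm hι
  have hk : (0 : ℝ) < 2 * Fintype.card ι := by
    have := Fintype.card_pos_iff.mpr (Finset.univ_nonempty_iff.mp hι)
    positivity
  have hlevel : ∀ t ∈ Ioi (0 : ℝ),
      volume.restrict (univ.pi fun _ : ι => closedBall (0 : ℂ) 1)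
          {x | t < -Finset.univ.sup' hι fun i => log ‖x i‖} =
        ENNReal.ofReal (π ^ Fintype.card ι * exp (-(2 * Fintype.card ι) * t)) := by
    intro t ht
    simp_rw [lt_neg]
    rw [Measure.restrict_apply (measurableSet_lt hg measurable_const),
      volume_setOf_sup'_log_norm_lt_inter_pi_closedBall hι (le_of_lt ht)]
  rw [lintegral_eq_lintegral_meas_lt _ (ae_restrict_pi_closedBall_neg_sup'_log_norm_nonneg hι)
      hg.neg.aemeasurable,
    setLIntegral_congr_fun measurableSet_Ioi hlevel,
    ← ofReal_integral_eq_lintegral_ofReal ((exp_neg_integrableOn_Ioi 0 hk).const_mul _)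
      (.of_forall fun t => by positivity),
    integral_const_mul, integral_exp_neg_mul_Ioi_zero hk, div_eq_mul_inv]

theorem integral_pi_closedBall_sup'_log_norm :
    ∫ x in univ.pi (fun _ : ι => closedBall (0 : ℂ) 1),
        Finset.univ.sup' hι (fun i => log ‖x i‖) =
      -(π ^ Fintype.card ι / (2 * Fintype.card ι)) := by
  rw [← neg_neg (∫ x in _, _), ← integral_neg,
    integral_eq_lintegral_of_nonneg_ae (ae_restrict_pi_closedBall_neg_sup'_log_norm_nonneg hι)
      (measurable_sup'_log_norm hι).neg.aestronglyMeasurable,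
    lintegral_pi_closedBall_neg_sup'_log_norm, ENNReal.toReal_ofReal (by positivity)]

end MaxLogNorm

/-- The generalized areal Mahler measure of `x₁, …, x_n` equals `−1/(2n)`. -/
theorem arealMahler_max (n : ℕ) (hn : 0 < n) :
    (1 / Real.pi ^ n) *
      ∫ x in Set.univ.pi fun _ : Fin n => Metric.closedBall (0 : ℂ) 1,
        Finset.univ.sup' (Finset.univ_nonempty_iff.mpr ⟨⟨0, hn⟩⟩)
          (fun i => Real.log ‖x i‖) =
    -1 / (2 * n) := by
  rw [integral_pi_closedBall_sup'_log_norm, Fintype.card_fin]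
  field_simp
end

section
/- Let D = {z ∈ ℂ : |z| ≤ 1} be the closed unit disk and A the Lebesgue (area) measure on ℂ. For every real number s ≥ 0, (1/π) ∫_{D} |x + 1|^s dA(x) = Γ(s+2) / Γ(s/2 + 2)², where Γ denotes Euler's Gamma function. -/
open MeasureTheory

open intervalIntegral Set Real

lemma beta_real {q : ℝ} (hq : 0 < q) :
    ∫ x in (0:ℝ)..1, x ^ q * (1 - x) ^ q
      = Real.Gamma (q+1) ^ 2 / Real.Gamma (2*q+2) := by
  have h1 : (0:ℝ) < q + 1 := by linarith
  have hG : Complex.Gamma ((q+1:ℝ):ℂ) * Complex.Gamma ((q+1:ℝ):ℂ)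
      = Complex.Gamma (((q+1:ℝ):ℂ) + ((q+1:ℝ):ℂ)) * Complex.betaIntegral ((q+1:ℝ):ℂ) ((q+1:ℝ):ℂ) := by
    apply Complex.Gamma_mul_Gamma_eq_betaIntegral <;> simpa using h1
  have hbeta : Complex.betaIntegral ((q+1:ℝ):ℂ) ((q+1:ℝ):ℂ)
      = ((∫ x in (0:ℝ)..1, x ^ q * (1 - x) ^ q : ℝ) : ℂ) := by
    rw [Complex.betaIntegral, ← intervalIntegral.integral_ofReal]
    apply intervalIntegral.integral_congr
    intro x hx
    rw [Set.uIcc_of_le (by norm_num : (0:ℝ) ≤ 1)] at hx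
    have hx0 : (0:ℝ) ≤ x := hx.1
    have hx1 : (0:ℝ) ≤ 1 - x := by linarith [hx.2]
    have e1 : ((q+1:ℝ):ℂ) - 1 = ((q:ℝ):ℂ) := by push_cast; ring
    dsimp only
    rw [e1, ← Complex.ofReal_cpow hx0, ← Complex.ofReal_one, ← Complex.ofReal_sub,
      ← Complex.ofReal_cpow hx1]
    push_cast
    ring
  have hGne : Complex.Gamma (((q+1:ℝ):ℂ) + ((q+1:ℝ):ℂ)) ≠ 0 := by
    apply Complex.Gamma_ne_zero_of_re_pos
    simp only [Complex.add_re, Complex.ofReal_re]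
    linarith
  rw [hbeta] at hG
  have key : ((∫ x in (0:ℝ)..1, x ^ q * (1 - x) ^ q : ℝ) : ℂ)
      = Complex.Gamma ((q+1:ℝ):ℂ) * Complex.Gamma ((q+1:ℝ):ℂ)
        / Complex.Gamma (((q+1:ℝ):ℂ) + ((q+1:ℝ):ℂ)) := by
    rw [eq_div_iff hGne]
    exact (mul_comm _ _).trans hG.symm
  have h2 : ((q+1:ℝ):ℂ) + ((q+1:ℝ):ℂ) = ((2*q+2 : ℝ) : ℂ) := by push_cast; ring
  rw [h2, Complex.Gamma_ofReal, Complex.Gamma_ofReal] at key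
  have := congrArg Complex.re key
  simpa [sq, Complex.ofReal_re, ← Complex.ofReal_mul, ← Complex.ofReal_div] using this

lemma int_one_sub_sq (q : ℝ) :
    ∫ u in (-1:ℝ)..1, (1-u^2)^q = 2 * 4^q * ∫ x in (0:ℝ)..1, x^q * (1-x)^q := by
  have h := intervalIntegral.integral_comp_mul_add (a := (0:ℝ)) (b := 1)
    (fun u : ℝ => (1-u^2)^q) (by norm_num : (2:ℝ) ≠ 0) (-1)
  norm_num at h
  have h2 : ∫ u in (-1:ℝ)..1, (1-u^2)^q = 2 * ∫ x in (0:ℝ)..1, (1 - (2*x + -1)^2)^q := by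
    rw [h]; ring
  rw [h2, mul_assoc]
  congr 1
  rw [← intervalIntegral.integral_const_mul]
  apply intervalIntegral.integral_congr
  intro x hx
  rw [Set.uIcc_of_le (by norm_num : (0:ℝ) ≤ 1)] at hx
  have hx0 : (0:ℝ) ≤ 4*x := by linarith [hx.1]
  have hx1 : (0:ℝ) ≤ 1 - x := by linarith [hx.2]
  have e : 1 - (2*x + -1)^2 = (4*x) * (1-x) := by ring
  dsimp only
  rw [e, Real.mul_rpow hx0 hx1, Real.mul_rpow (by norm_num) (by linarith [hx.1])]
  ring

lemma cos_rpow_int {q : ℝ} (hq : 0 ≤ q) :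
    ∫ θ in (-(π/2):ℝ)..(π/2), Real.cos θ ^ (2*q+1)
      = ∫ u in (-1:ℝ)..1, (1-u^2)^q := by
  have hg : Continuous fun u : ℝ => (1-u^2)^q := by
    apply Continuous.rpow_const (by continuity)
    exact fun x => Or.inr hq
  have h := intervalIntegral.integral_comp_smul_deriv
    (a := -(π/2)) (b := π/2) (f := Real.sin) (f' := Real.cos)
    (g := fun u : ℝ => (1-u^2)^q)
    (fun x _ => Real.hasDerivAt_sin x) Real.continuousOn_cos hg
  rw [Real.sin_neg, Real.sin_pi_div_two] at h
  rw [← h]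
  apply intervalIntegral.integral_congr
  intro θ hθ
  rw [Set.uIcc_of_le (by linarith [Real.pi_pos] : -(π/2) ≤ π/2)] at hθ
  have hc : 0 ≤ Real.cos θ := Real.cos_nonneg_of_mem_Icc hθ
  have e : 1 - Real.sin θ ^ 2 = Real.cos θ ^ 2 := (Real.cos_sq' θ).symm
  show Real.cos θ ^ (2*q+1) = Real.cos θ • (1 - Real.sin θ ^ 2) ^ q
  rw [smul_eq_mul, e, ← Real.rpow_natCast (Real.cos θ) 2, ← Real.rpow_mul hc]
  rw [add_comm (2*q) 1, Real.rpow_add' hc (by positivity), Real.rpow_one]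
  norm_num

lemma key_trig {q : ℝ} (hq : 0 < q) :
    ∫ θ in (-(π/2):ℝ)..(π/2), Real.cos θ ^ (2*q+1)
      = 2 * 4^q * (Real.Gamma (q+1) ^ 2 / Real.Gamma (2*q+2)) := by
  rw [cos_rpow_int hq.le, int_one_sub_sq, beta_real hq]


/-- The areal zeta Mahler measure of `x + 1`: for `s ≥ 0`,
`(1/π) ∫_D |x+1|^s dA(x) = Γ(s+2)/Γ(s/2+2)²`. -/
theorem arealZetaMahler_x_add_one (s : ℝ) (hs : 0 ≤ s) :
    (1 / Real.pi) *
      ∫ x in Metric.closedBall (0 : ℂ) 1, ‖x + 1‖ ^ s =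
    Real.Gamma (s + 2) / Real.Gamma (s / 2 + 2) ^ 2 := by
  set q : ℝ := (s+1)/2 with hqdef
  have hq : 0 < q := by rw [hqdef]; linarith
  set S : Set (ℝ × ℝ) := (Set.Ioi (0:ℝ) ×ˢ Set.Ioo (-π) π) ∩ {p : ℝ × ℝ | p.1 ≤ 2 * Real.cos p.2} with hSdef
  have hS_meas : MeasurableSet S := by
    apply MeasurableSet.inter
    · exact (measurableSet_Ioi.prod measurableSet_Ioo)
    · exact isClosed_le continuous_fst (continuous_const.mul (Real.continuous_cos.comp continuous_snd)) |>.measurableSet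
  set F : ℝ × ℝ → ℝ := S.indicator (fun p => p.1 ^ (s+1)) with hFdef
  have hf_cont : Continuous (fun p : ℝ × ℝ => p.1 ^ (s+1)) :=
    continuous_fst.rpow_const fun _ => Or.inr (by linarith)
  have hF_int : Integrable F := by
    rw [hFdef, integrable_indicator_iff hS_meas]
    apply Measure.integrableOn_of_bounded (M := (2:ℝ)^(s+1))
    · apply ne_of_lt
      calc volume S ≤ volume (Set.Ioc (0:ℝ) 2 ×ˢ Set.Ioo (-π) π) := by
            apply measure_mono
            rintro ⟨r, θ⟩ ⟨⟨hr, hθ⟩, hcond⟩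
            refine ⟨⟨hr, ?_⟩, hθ⟩
            have : Real.cos θ ≤ 1 := Real.cos_le_one θ
            simp only [Set.mem_setOf_eq] at hcond
            linarith
        _ < ⊤ := by
            rw [Measure.volume_eq_prod, Measure.prod_prod, Real.volume_Ioc, Real.volume_Ioo]
            exact ENNReal.mul_lt_top ENNReal.ofReal_lt_top ENNReal.ofReal_lt_top
    · exact hf_cont.aestronglyMeasurable
    · filter_upwards [ae_restrict_mem hS_meas] with p hp
      obtain ⟨⟨hr, hθ⟩, hcond⟩ := hp
      simp only [Set.mem_setOf_eq] at hcond
      have hr0 : (0:ℝ) < p.1 := hr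
      have h2 : p.1 ≤ 2 := by
        have : Real.cos p.2 ≤ 1 := Real.cos_le_one p.2
        linarith
      rw [Real.norm_eq_abs, abs_of_nonneg (Real.rpow_nonneg hr0.le _)]
      exact Real.rpow_le_rpow hr0.le h2 (by linarith)
  -- Step 1: translation
  have h_trans : ∫ x in Metric.closedBall (0 : ℂ) 1, ‖x + 1‖ ^ s
      = ∫ z, (Metric.closedBall (1:ℂ) 1).indicator (fun z => ‖z‖ ^ s) z := by
    rw [← MeasureTheory.integral_indicator (measurableSet_closedBall)]
    rw [← MeasureTheory.integral_add_right_eq_self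
      ((Metric.closedBall (1:ℂ) 1).indicator (fun z => ‖z‖ ^ s)) 1]
    congr 1
    funext x
    have hmem : x + 1 ∈ Metric.closedBall (1:ℂ) 1 ↔ x ∈ Metric.closedBall (0:ℂ) 1 := by
      simp [Metric.mem_closedBall, Complex.dist_eq]
    by_cases hx : x ∈ Metric.closedBall (0:ℂ) 1
    · rw [Set.indicator_of_mem hx, Set.indicator_of_mem (hmem.mpr hx)]
    · rw [Set.indicator_of_notMem hx, Set.indicator_of_notMem (fun h => hx (hmem.mp h))]
  -- Step 2: polar coordinates
  have h_polar : ∫ z, (Metric.closedBall (1:ℂ) 1).indicator (fun z => ‖z‖ ^ s) z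
      = ∫ p, F p := by
    rw [← Complex.integral_comp_polarCoord_symm
      ((Metric.closedBall (1:ℂ) 1).indicator (fun z => ‖z‖ ^ s))]
    have hT_meas : MeasurableSet polarCoord.target := polarCoord.open_target.measurableSet
    have hstep : ∫ p in polarCoord.target,
        p.1 • (Metric.closedBall (1:ℂ) 1).indicator (fun z => ‖z‖ ^ s)
          (Complex.polarCoord.symm p)
        = ∫ p in polarCoord.target, F p := by
      apply setIntegral_congr_fun hT_meas
      intro p hp
      rw [polarCoord_target] at hp
      obtain ⟨hr, hθ⟩ := hp
      have hr0 : (0:ℝ) < p.1 := hr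
      have habs : ‖Complex.polarCoord.symm p‖ = p.1 := by
        rw [Complex.norm_polarCoord_symm, abs_of_pos hr0]
      have hnsq : Complex.normSq (Complex.polarCoord.symm p - 1)
          = p.1^2 - 2*p.1*Real.cos p.2 + 1 := by
        rw [Complex.polarCoord_symm_apply]
        simp only [Complex.normSq_apply, Complex.sub_re, Complex.sub_im, Complex.add_re,
          Complex.add_im, Complex.mul_re, Complex.mul_im, Complex.ofReal_re, Complex.ofReal_im,
          Complex.I_re, Complex.I_im, Complex.one_re, Complex.one_im]
        ring_nf
        linear_combination (p.1^2) * (Real.sin_sq_add_cos_sq p.2)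
      have hmem : Complex.polarCoord.symm p ∈ Metric.closedBall (1:ℂ) 1 ↔ p.1 ≤ 2*Real.cos p.2 := by
        rw [Metric.mem_closedBall, Complex.dist_eq]
        have h1 : ‖Complex.polarCoord.symm p - 1‖ ≤ 1
            ↔ Complex.normSq (Complex.polarCoord.symm p - 1) ≤ 1 := by
          rw [← Complex.sq_norm]
          constructor
          · intro h; nlinarith [norm_nonneg (Complex.polarCoord.symm p - 1)]
          · intro h; nlinarith [norm_nonneg (Complex.polarCoord.symm p - 1)]
        rw [h1, hnsq]
        constructor
        · intro h; nlinarith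
        · intro h; nlinarith
      dsimp only
      by_cases hcond : p.1 ≤ 2*Real.cos p.2
      · rw [Set.indicator_of_mem (hmem.mpr hcond)]
        have hpS : p ∈ S := ⟨⟨hr, hθ⟩, hcond⟩
        rw [hFdef, Set.indicator_of_mem hpS]
        rw [habs, smul_eq_mul]
        rw [Real.rpow_add_one (ne_of_gt hr0)]
        ring
      · rw [Set.indicator_of_notMem (fun h => hcond (hmem.mp h))]
        have hpS : p ∉ S := fun h => hcond h.2
        rw [hFdef, Set.indicator_of_notMem hpS, smul_zero]
    rw [hstep, hFdef, setIntegral_indicator hS_meas, MeasureTheory.integral_indicator hS_meas]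
    have hTS : polarCoord.target ∩ S = S := by
      rw [polarCoord_target]
      exact Set.inter_eq_self_of_subset_right (fun p hp => hp.1)
    rw [hTS]
  -- Step 3: Fubini
  have h_fub : ∫ p, F p
      = ∫ θ, ∫ r, F (r, θ) := by
    rw [Measure.volume_eq_prod] at hF_int
    have hsw : Integrable (Function.uncurry (fun θ r => F (r, θ))) (volume.prod volume) :=
      hF_int.swap
    have h1 := MeasureTheory.integral_integral hsw
    have h2 := integral_prod_swap (μ := (volume : Measure ℝ)) (ν := (volume : Measure ℝ)) F
    rw [Measure.volume_eq_prod, ← h2]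
    exact h1.symm
  -- Step 4: inner integral
  have h_inner : ∀ θ : ℝ, ∫ r, F (r, θ)
      = (Set.Ioo (-π) π).indicator (fun θ => ∫ r in Set.Ioc 0 (2 * Real.cos θ), r ^ (s+1)) θ := by
    intro θ
    by_cases hθ : θ ∈ Set.Ioo (-π) π
    · rw [Set.indicator_of_mem hθ]
      have hFr : ∀ r : ℝ, F (r, θ)
          = (Set.Ioc (0:ℝ) (2*Real.cos θ)).indicator (fun r => r ^ (s+1)) r := by
        intro r
        rw [hFdef]
        by_cases hr : r ∈ Set.Ioc (0:ℝ) (2*Real.cos θ)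
        · have hmS : (r,θ) ∈ S := ⟨⟨hr.1, hθ⟩, hr.2⟩
          rw [Set.indicator_of_mem hr, Set.indicator_of_mem hmS]
        · rw [Set.indicator_of_notMem hr, Set.indicator_of_notMem
            (fun hm => hr ⟨hm.1.1, hm.2⟩)]
      simp_rw [hFr]
      rw [MeasureTheory.integral_indicator measurableSet_Ioc]
    · rw [Set.indicator_of_notMem hθ]
      have hFr : ∀ r : ℝ, F (r, θ) = 0 := by
        intro r
        rw [hFdef]
        exact Set.indicator_of_notMem (fun hm => hθ hm.1.2) _
      simp_rw [hFr]
      exact integral_zero _ _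
  -- Step 5: outer integral reduction
  have h_outer : ∫ θ, (Set.Ioo (-π) π).indicator
        (fun θ => ∫ r in Set.Ioc 0 (2 * Real.cos θ), r ^ (s+1)) θ
      = 2 ^ (s+2) / (s+2) * ∫ θ in (-(π/2):ℝ)..(π/2), Real.cos θ ^ (2*q+1) := by
    have hpi := Real.pi_pos
    rw [MeasureTheory.integral_indicator measurableSet_Ioo]
    have hcongr : Set.EqOn (fun θ => ∫ r in Set.Ioc 0 (2 * Real.cos θ), r ^ (s+1))
        ((Set.Icc (-(π/2)) (π/2)).indicator (fun θ => (2*Real.cos θ)^(s+2)/(s+2)))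
        (Set.Ioo (-π) π) := by
      intro θ hθ
      dsimp only
      by_cases h2 : θ ∈ Set.Icc (-(π/2)) (π/2)
      · rw [Set.indicator_of_mem h2]
        have hc : 0 ≤ Real.cos θ := Real.cos_nonneg_of_mem_Icc h2
        rw [← intervalIntegral.integral_of_le (by linarith : (0:ℝ) ≤ 2*Real.cos θ)]
        rw [integral_rpow (Or.inl (by linarith : (-1:ℝ) < s+1))]
        rw [Real.zero_rpow (by linarith : s+1+1 ≠ 0)]
        rw [show s+1+1 = s+2 by ring, sub_zero]
      · rw [Set.indicator_of_notMem h2]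
        have hcneg : Real.cos θ < 0 := by
          rcases lt_or_ge θ 0 with hneg | hpos
          · have h1 : π/2 < -θ := by
              rcases not_and_or.mp (fun hand => h2 ⟨hand.1, hand.2⟩) with h | h
              · push_neg at h; linarith
              · push_neg at h; linarith
            have h2' : -θ < π + π/2 := by
              have := hθ.1; linarith
            have := Real.cos_neg_of_pi_div_two_lt_of_lt h1 h2'
            rwa [Real.cos_neg] at this
          · have h1 : π/2 < θ := by
              rcases not_and_or.mp (fun hand => h2 ⟨hand.1, hand.2⟩) with h | h
              · push_neg at h; linarith
              · push_neg at h; linarith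
            exact Real.cos_neg_of_pi_div_two_lt_of_lt h1 (by linarith [hθ.2])
        rw [Set.Ioc_eq_empty (by linarith : ¬ (0:ℝ) < 2*Real.cos θ)]
        simp
    rw [setIntegral_congr_fun measurableSet_Ioo hcongr]
    rw [setIntegral_indicator measurableSet_Icc]
    have hsub : Set.Ioo (-π) π ∩ Set.Icc (-(π/2)) (π/2) = Set.Icc (-(π/2)) (π/2) := by
      apply Set.inter_eq_self_of_subset_right
      intro x hx
      exact ⟨by linarith [hx.1], by linarith [hx.2]⟩
    rw [hsub, MeasureTheory.integral_Icc_eq_integral_Ioc,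
      ← intervalIntegral.integral_of_le (by linarith : -(π/2) ≤ π/2)]
    rw [show 2*q+1 = s+2 from by rw [hqdef]; ring]
    rw [← intervalIntegral.integral_const_mul]
    apply intervalIntegral.integral_congr
    intro θ hθ'
    rw [Set.uIcc_of_le (by linarith : -(π/2) ≤ π/2)] at hθ'
    have hc := Real.cos_nonneg_of_mem_Icc hθ'
    dsimp only
    rw [Real.mul_rpow (by norm_num : (0:ℝ) ≤ 2) hc]
    ring
  -- Assemble
  rw [h_trans, h_polar, h_fub]
  simp_rw [h_inner]
  rw [h_outer, key_trig hq]
  -- Step 6: Gamma algebra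
  have hpi := Real.pi_pos
  have hP : (0:ℝ) < (2:ℝ)^(s+2) := Real.rpow_pos_of_pos (by norm_num) _
  have hC : 0 < Real.Gamma (s+2) := Real.Gamma_pos_of_pos (by linarith)
  have hB : 0 < Real.Gamma (s/2+2) := Real.Gamma_pos_of_pos (by linarith)
  have hs2 : (0:ℝ) < s+2 := by linarith
  have e1 : q + 1 = s/2 + 3/2 := by rw [hqdef]; ring
  have e2 : 2*q + 2 = s + 3 := by rw [hqdef]; ring
  have h4 : (4:ℝ)^q = 2^(s+1) := by
    have h42 : (4:ℝ) = (2:ℝ)^((2:ℕ):ℝ) := by rw [Real.rpow_natCast]; norm_num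
    rw [h42, ← Real.rpow_mul (by norm_num : (0:ℝ) ≤ 2)]
    congr 1
    rw [hqdef]; push_cast; ring
  have hG3 : Real.Gamma (s+3) = (s+2) * Real.Gamma (s+2) := by
    rw [show s+3 = (s+2)+1 from by ring, Real.Gamma_add_one (by linarith : s+2 ≠ 0)]
  have hdup := Real.Gamma_mul_Gamma_add_half (s/2 + 3/2)
  rw [show s/2+3/2+1/2 = s/2+2 from by ring, show 2*(s/2+3/2) = s+3 from by ring,
    show 1-(s+3) = -(s+2) from by ring] at hdup
  have h2pow : (2:ℝ) * 2^(s+1) = 2^(s+2) := by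
    rw [Real.rpow_add (by norm_num : (0:ℝ) < 2) s 1, Real.rpow_add (by norm_num : (0:ℝ) < 2) s 2]
    norm_num
    ring
  have h1 : Real.Gamma (s/2+3/2) * Real.Gamma (s/2+2) * (2:ℝ)^(s+2)
      = (s+2) * Real.Gamma (s+2) * Real.sqrt π := by
    have hinv : (2:ℝ)^(-(s+2)) * 2^(s+2) = 1 := by
      rw [← Real.rpow_add (by norm_num : (0:ℝ) < 2), neg_add_cancel, Real.rpow_zero]
    rw [hdup, hG3]
    linear_combination ((s+2) * Real.Gamma (s+2) * Real.sqrt π) * hinv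
  have hkey : (Real.Gamma (s/2+3/2))^2 * ((Real.Gamma (s/2+2))^2 * ((2:ℝ)^(s+2))^2)
      = (s+2)^2 * ((Real.Gamma (s+2))^2 * π) := by
    have h2 : (Real.Gamma (s/2+3/2) * Real.Gamma (s/2+2) * (2:ℝ)^(s+2))^2
        = ((s+2) * Real.Gamma (s+2) * Real.sqrt π)^2 := by rw [h1]
    rw [mul_pow, mul_pow, mul_pow, mul_pow, Real.sq_sqrt hpi.le] at h2
    linarith [h2]
  rw [e1, e2, h4, hG3, h2pow]
  set A := Real.Gamma (s/2+3/2) with hAdef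
  set B := Real.Gamma (s/2+2) with hBdef
  set C := Real.Gamma (s+2) with hCdef
  set P := (2:ℝ)^(s+2) with hPdef
  field_simp
  linear_combination hkey
end

section
/- Let D = {z ∈ ℂ : |z| ≤ 1} be the closed unit disk and A the Lebesgue (area) measure on ℂ. For every real number s with |s| < 1, (1/π) ∫_{D} |x + 1|^s dA(x) = exp( Σ_{j=2}^{∞} ((−1)^j / j) (1 − 2^{1−j}) (ζ(j) − 1) s^j ), where ζ is the Riemann zeta function. -/
open MeasureTheory Filter Topology Finset

/-- The Riemann zeta value `ζ(j) = Σ_{n≥1} 1/n^j` (as a real number, for `j ≥ 2`). -/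
noncomputable def zetaVal (j : ℕ) : ℝ := ∑' n : ℕ, 1 / ((n : ℝ) + 1) ^ j

noncomputable def mm (j : ℕ) : ℝ := (j : ℝ) + 2

lemma mm_two_le (j : ℕ) : 2 ≤ mm j := by
  have : (0:ℝ) ≤ (j:ℝ) := Nat.cast_nonneg j
  simp only [mm]; linarith

lemma mm_pos (j : ℕ) : 0 < mm j := lt_of_lt_of_le two_pos (mm_two_le j)

noncomputable def ca (s : ℝ) (k : ℕ) : ℝ :=
  ((-1 : ℝ) ^ (k + 2) / ((k : ℝ) + 2)) * (1 - (2 : ℝ) ^ ((1 : ℤ) - ((k : ℤ) + 2))) * s ^ (k + 2)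

noncomputable def aa (s : ℝ) (j : ℕ) : ℝ := (mm j + s/2)^2 / ((mm j + s) * mm j)

lemma two_zpow_eq (k : ℕ) : (2 : ℝ) ^ ((1 : ℤ) - ((k : ℤ) + 2)) = 2 / 2 ^ (k + 2) := by
  rw [zpow_sub₀ (two_ne_zero), zpow_one,
    show ((k : ℤ) + 2) = ((k + 2 : ℕ) : ℤ) by push_cast; ring, zpow_natCast]

lemma two_zpow_mem (k : ℕ) : 0 < (2 : ℝ) ^ ((1 : ℤ) - ((k : ℤ) + 2)) ∧
    (2 : ℝ) ^ ((1 : ℤ) - ((k : ℤ) + 2)) ≤ 1 := by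
  rw [two_zpow_eq]
  constructor
  · positivity
  · rw [div_le_one (by positivity)]
    calc (2:ℝ) = 2^1 := (pow_one 2).symm
    _ ≤ 2^(k+2) := pow_le_pow_right₀ one_le_two (by omega)

lemma ca_abs_le (s : ℝ) (hs : |s| < 1) (k : ℕ) : |ca s k| ≤ 1 := by
  have h2 := two_zpow_mem k
  have h1 : |(-1 : ℝ) ^ (k + 2) / ((k : ℝ) + 2)| ≤ 1 := by
    rw [abs_div, abs_pow, abs_neg, abs_one, one_pow]
    rw [abs_of_pos (by positivity)]
    rw [div_le_one (by positivity)]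
    have : (0:ℝ) ≤ (k:ℝ) := Nat.cast_nonneg k
    linarith
  have h3 : |1 - (2 : ℝ) ^ ((1 : ℤ) - ((k : ℤ) + 2))| ≤ 1 := by
    rw [abs_of_nonneg (by linarith [h2.2])]; linarith [h2.1]
  have h4 : |s ^ (k+2)| ≤ 1 := by
    rw [abs_pow]; exact pow_le_one₀ (abs_nonneg s) hs.le
  calc |ca s k| = |(-1 : ℝ) ^ (k + 2) / ((k : ℝ) + 2)| * |1 - (2 : ℝ) ^ ((1 : ℤ) - ((k : ℤ) + 2))|
      * |s ^ (k+2)| := by rw [ca, abs_mul, abs_mul]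
    _ ≤ 1 * 1 * 1 := by gcongr
    _ = 1 := by norm_num


lemma aa_pos {s : ℝ} (hs : |s| < 1) (j : ℕ) : 0 < aa s j := by
  obtain ⟨h1, h2⟩ := abs_lt.mp hs
  have hm := mm_two_le j
  have : 0 < mm j + s/2 := by linarith
  have : 0 < mm j + s := by linarith
  have := mm_pos j
  rw [aa]; positivity

lemma hasSum_log_aa {s : ℝ} (hs : |s| < 1) (j : ℕ) :
    HasSum (fun k => ca s k * (1 / (mm j) ^ (k + 2))) (Real.log (aa s j)) := by
  obtain ⟨hs1, hs2⟩ := abs_lt.mp hs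
  have hm := mm_two_le j
  have hmp := mm_pos j
  set x : ℝ := s / mm j with hx
  have hxabs : |x| < 1/2 := by
    rw [hx, abs_div, abs_of_pos hmp, div_lt_iff₀ hmp]
    calc |s| < 1 := hs
    _ ≤ 1/2 * mm j := by linarith
  have hxa : |(-x)| < 1 := by rw [abs_neg]; linarith [abs_nonneg x]
  have hxb : |(-(x/2))| < 1 := by
    rw [abs_neg, abs_div, abs_two]; linarith [abs_nonneg x]
  have h1 := Real.hasSum_pow_div_log_of_abs_lt_one hxa
  have h2 := Real.hasSum_pow_div_log_of_abs_lt_one hxb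
  rw [sub_neg_eq_add] at h1 h2
  -- h1 : HasSum (fun n => (-x)^(n+1)/(n+1)) (-log (1+x))
  -- h2 : HasSum (fun n => (-(x/2))^(n+1)/(n+1)) (-log (1+x/2))
  have hx1 : (0:ℝ) < 1 + x := by nlinarith [abs_lt.mp hxabs]
  have hx12 : (0:ℝ) < 1 + x/2 := by nlinarith [abs_lt.mp hxabs]
  have hcomb := (h2.mul_left (-2)).add h1
  have hval : -2 * -Real.log (1 + x/2) + -Real.log (1 + x) = Real.log (aa s j) := by
    have hmsne : mm j + s ≠ 0 := ne_of_gt (by linarith)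
    have hmne : mm j ≠ 0 := hmp.ne'
    have e1 : 1 + x/2 = (mm j + s/2)/mm j := by
      rw [hx, eq_div_iff hmne, add_mul, div_right_comm, div_mul_cancel₀ (s/2) hmne]
      ring
    have e2 : 1 + x = (mm j + s)/mm j := by
      rw [hx, eq_div_iff hmne, add_mul, div_mul_cancel₀ s hmne]
      ring
    have haj : aa s j = (1 + x/2)^2 / (1 + x) := by
      rw [aa, e1, e2]
      field_simp
    rw [haj, Real.log_div (by positivity) (by positivity), Real.log_pow]
    push_cast; ring
  rw [hval] at hcomb
  set f : ℕ → ℝ := fun n => -2 * ((-(x/2)) ^ (n + 1) / ((n:ℝ) + 1)) + (-x) ^ (n + 1) / ((n:ℝ) + 1)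
    with hf
  have hzero : ∑ i ∈ Finset.range 1, f i = 0 := by
    rw [Finset.sum_range_one, hf]
    norm_num
    ring
  have key : HasSum (fun n => f (n + 1)) (Real.log (aa s j)) := by
    rw [hasSum_nat_add_iff 1, hzero, add_zero]
    exact hcomb
  have hfg : (fun k => ca s k * (1 / (mm j) ^ (k + 2))) = fun n => f (n + 1) := by
    funext k
    rw [hf]
    simp only [ca, two_zpow_eq, hx]
    have h2k : (2:ℝ)^(k+2) ≠ 0 := by positivity
    have hkk : ((k:ℝ) + 2) ≠ 0 := by positivity
    have hmne : mm j ≠ 0 := (mm_pos j).ne'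
    push_cast
    have e3 : (-(s / mm j / 2) : ℝ) ^ (k + 1 + 1)
        = (-1)^(k+1+1) * s^(k+1+1) / (mm j^(k+1+1) * 2^(k+1+1)) := by
      rw [show (-(s / mm j / 2) : ℝ) = ((-1) * s)/(mm j * 2) by rw [div_div]; ring, div_pow,
        mul_pow, mul_pow]
    have e4 : (-(s / mm j) : ℝ) ^ (k + 1 + 1) = (-1)^(k+1+1) * s^(k+1+1) / mm j^(k+1+1) := by
      rw [show (-(s / mm j) : ℝ) = ((-1) * s)/ mm j by ring, div_pow, mul_pow]
    rw [e3, e4]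
    have hmk : mm j ^ (k+2) ≠ 0 := pow_ne_zero _ hmne
    have hmk' : mm j ^ (k+1+1) ≠ 0 := pow_ne_zero _ hmne
    have h2k' : (2:ℝ) ^ (k+1+1) ≠ 0 := by positivity
    field_simp
    ring
  rw [hfg]
  exact key


lemma summable_inv_sq : Summable (fun j : ℕ => (1 / (mm j))^2) := by
  have h := (Real.summable_one_div_nat_pow (p := 2)).mpr one_lt_two
  have h2 : Summable (fun n : ℕ => 1 / ((n + 2 : ℕ) : ℝ) ^ 2) :=
    h.comp_injective (add_left_injective 2)
  refine h2.congr fun j => ?_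
  rw [div_pow, one_pow, mm]
  norm_cast

lemma summable_bb {s : ℝ} (hs : |s| < 1) :
    Summable (fun p : ℕ × ℕ => ca s p.2 * (1 / (mm p.1) ^ (p.2 + 2))) := by
  have hgeom : Summable (fun k : ℕ => (1/2 : ℝ) ^ k) := summable_geometric_of_lt_one (by norm_num)
    (by norm_num)
  have hsum : Summable (fun p : ℕ × ℕ => ((1 / (mm p.1))^2) * ((1/2 : ℝ) ^ p.2)) :=
    summable_inv_sq.mul_of_nonneg hgeom (fun j => sq_nonneg _) (fun k => by positivity)
  refine Summable.of_norm_bounded hsum fun p => ?_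
  obtain ⟨j, k⟩ := p
  have hmp := mm_pos j
  have hm2 := mm_two_le j
  have hmm : (0:ℝ) < 1 / mm j ^ (k+2) := by positivity
  have h1 : ‖ca s k * (1 / (mm j) ^ (k + 2))‖ = |ca s k| * (1 / (mm j) ^ (k+2)) := by
    rw [norm_mul, Real.norm_eq_abs, Real.norm_eq_abs, abs_of_pos hmm]
  rw [h1]
  calc |ca s k| * (1 / (mm j) ^ (k+2)) ≤ 1 * (1 / (mm j) ^ (k+2)) := by
        gcongr; exact ca_abs_le s hs k
    _ = (1 / mm j) ^ (k+2) := by rw [one_mul, div_pow, one_pow]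
    _ = (1 / mm j)^2 * (1 / mm j) ^ k := by rw [pow_add, mul_comm]
    _ ≤ (1 / mm j)^2 * (1/2 : ℝ) ^ k := by
        have h12 : (1/mm j) ≤ 1/2 := by rw [div_le_div_iff₀ hmp two_pos]; linarith
        have h0 : (0:ℝ) ≤ 1/mm j := le_of_lt (one_div_pos.mpr hmp)
        exact mul_le_mul_of_nonneg_left (pow_le_pow_left₀ h0 h12 k) (sq_nonneg _)
  
lemma hasSum_zeta_tail (i : ℕ) (hi : 2 ≤ i) :
    HasSum (fun j : ℕ => 1 / (mm j) ^ i) (zetaVal i - 1) := by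
  have hsum : Summable (fun n : ℕ => 1 / ((n : ℝ) + 1) ^ i) := by
    have h := (Real.summable_one_div_nat_pow (p := i)).mpr (by omega)
    have := h.comp_injective (add_left_injective 1)
    refine this.congr fun n => ?_
    simp only [Function.comp_apply]
    norm_cast
  have htail : Summable (fun n : ℕ => 1 / ((n : ℝ) + 1 + 1) ^ i) := by
    have := hsum.comp_injective (add_left_injective 1)
    refine this.congr fun n => ?_
    simp only [Function.comp_apply]
    norm_cast
  have h0 : zetaVal i = 1 + ∑' n : ℕ, 1 / ((n : ℝ) + 1 + 1) ^ i := by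
    rw [zetaVal, hsum.tsum_eq_zero_add]
    norm_num
  have : HasSum (fun n : ℕ => 1 / ((n : ℝ) + 1 + 1) ^ i) (zetaVal i - 1) := by
    have := htail.hasSum
    rwa [show ∑' n : ℕ, 1 / ((n : ℝ) + 1 + 1) ^ i = zetaVal i - 1 by rw [h0]; ring] at this
  refine this.congr_fun fun j => ?_
  rw [mm]
  ring_nf


lemma hasSum_log_total {s : ℝ} (hs : |s| < 1) :
    HasSum (fun j => Real.log (aa s j)) (∑' k : ℕ, ca s k * (zetaVal (k + 2) - 1)) := by
  have hbb := summable_bb hs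
  set S : ℝ := ∑' p : ℕ × ℕ, ca s p.2 * (1 / (mm p.1) ^ (p.2 + 2)) with hS
  have hrow : HasSum (fun j => Real.log (aa s j)) S :=
    hbb.hasSum.prod_fiberwise (fun j => hasSum_log_aa hs j)
  have hswap : HasSum (fun p : ℕ × ℕ => ca s p.1 * (1 / (mm p.2) ^ (p.1 + 2))) S := by
    have := hbb.hasSum
    exact ((Equiv.prodComm ℕ ℕ).hasSum_iff).mpr this
  have hcol : HasSum (fun k : ℕ => ca s k * (zetaVal (k + 2) - 1)) S :=
    hswap.prod_fiberwise (fun k => (hasSum_zeta_tail (k + 2) (by omega)).mul_left (ca s k))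
  rwa [hcol.tsum_eq]

lemma tendsto_prod_exp {s : ℝ} (hs : |s| < 1) :
    Tendsto (fun n => ∏ j ∈ Finset.range (n + 1), aa s j) atTop
      (𝓝 (Real.exp (∑' k : ℕ, ca s k * (zetaVal (k + 2) - 1)))) := by
  have h := (hasSum_log_total hs).tendsto_sum_nat
  have h2 : Tendsto (fun n => ∑ j ∈ Finset.range (n + 1), Real.log (aa s j)) atTop
      (𝓝 (∑' k : ℕ, ca s k * (zetaVal (k + 2) - 1))) :=
    h.comp (tendsto_add_atTop_nat 1)
  have h3 := (Real.continuous_exp.tendsto _).comp h2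
  refine h3.congr fun n => ?_
  simp only [Function.comp_apply]
  rw [Real.exp_sum]
  exact Finset.prod_congr rfl fun j _ => Real.exp_log (aa_pos hs j)

lemma prod_aa_eq_gammaSeq {s : ℝ} (hs : |s| < 1) (n : ℕ) (hn : n ≠ 0) :
    ∏ j ∈ Finset.range (n + 1), aa s j =
      Real.GammaSeq (s + 2) n * Real.GammaSeq 2 n / (Real.GammaSeq (s/2 + 2) n) ^ 2 := by
  obtain ⟨hs1, hs2⟩ := abs_lt.mp hs
  have hnr : (0:ℝ) < (n:ℝ) := by exact_mod_cast Nat.pos_of_ne_zero hn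
  have hP1 : ∀ j ∈ Finset.range (n+1), (0:ℝ) < s + 2 + j := fun j _ => by
    have : (0:ℝ) ≤ (j:ℝ) := Nat.cast_nonneg j; linarith
  have hP2 : ∀ j ∈ Finset.range (n+1), (0:ℝ) < (2:ℝ) + j := fun j _ => by
    have : (0:ℝ) ≤ (j:ℝ) := Nat.cast_nonneg j; linarith
  have hP3 : ∀ j ∈ Finset.range (n+1), (0:ℝ) < s/2 + 2 + j := fun j _ => by
    have : (0:ℝ) ≤ (j:ℝ) := Nat.cast_nonneg j; linarith
  have hP1' : (0:ℝ) < ∏ j ∈ Finset.range (n+1), (s + 2 + j) := Finset.prod_pos hP1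
  have hP2' : (0:ℝ) < ∏ j ∈ Finset.range (n+1), ((2:ℝ) + j) := Finset.prod_pos hP2
  have hP3' : (0:ℝ) < ∏ j ∈ Finset.range (n+1), (s/2 + 2 + j) := Finset.prod_pos hP3
  have hfac : (0:ℝ) < (n.factorial : ℝ) := by exact_mod_cast n.factorial_pos
  have hpow : ((n:ℝ) ^ (s+2 : ℝ)) * ((n:ℝ) ^ (2:ℝ)) = ((n:ℝ) ^ (s/2+2 : ℝ))^2 := by
    rw [← Real.rpow_natCast ((n:ℝ) ^ (s/2+2 : ℝ)) 2, ← Real.rpow_mul hnr.le,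
      ← Real.rpow_add hnr]
    rw [show (s + 2 + (2:ℝ)) = (s/2+2)*2 by ring]
    norm_cast
  have hprod : ∏ j ∈ Finset.range (n + 1), aa s j =
      (∏ j ∈ Finset.range (n+1), (s/2 + 2 + j))^2 /
        ((∏ j ∈ Finset.range (n+1), (s + 2 + j)) * (∏ j ∈ Finset.range (n+1), ((2:ℝ) + j))) := by
    rw [← Finset.prod_pow, ← Finset.prod_mul_distrib, ← Finset.prod_div_distrib]
    refine Finset.prod_congr rfl fun j _ => ?_
    rw [aa, mm]
    ring_nf
  rw [hprod, Real.GammaSeq, Real.GammaSeq, Real.GammaSeq]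
  set P1 := ∏ j ∈ Finset.range (n+1), (s + 2 + (j:ℝ)) with hP1d
  set P2 := ∏ j ∈ Finset.range (n+1), ((2:ℝ) + (j:ℝ)) with hP2d
  set P3 := ∏ j ∈ Finset.range (n+1), (s/2 + 2 + (j:ℝ)) with hP3d
  have hCc : ((n:ℝ) ^ (s/2+2 : ℝ)) * (n.factorial:ℝ) ≠ 0 :=
    mul_ne_zero (Real.rpow_pos_of_pos hnr _).ne' hfac.ne'
  have hAB : ((n:ℝ) ^ (s+2 : ℝ) * (n.factorial:ℝ)) * ((n:ℝ) ^ (2:ℝ) * (n.factorial:ℝ))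
      = (((n:ℝ) ^ (s/2+2 : ℝ)) * (n.factorial:ℝ))^2 := by
    rw [mul_pow, ← hpow]; ring
  rw [div_mul_div_comm, hAB, div_pow, div_div_div_comm, div_self (pow_ne_zero 2 hCc), one_div,
    inv_div]


lemma gamma_ratio_eq_exp {s : ℝ} (hs : |s| < 1) :
    Real.Gamma (s + 2) / Real.Gamma (s/2 + 2) ^ 2 =
      Real.exp (∑' k : ℕ, ca s k * (zetaVal (k + 2) - 1)) := by
  obtain ⟨hs1, hs2⟩ := abs_lt.mp hs
  have hg2 : Real.Gamma 2 = 1 := by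
    rw [show (2:ℝ) = 1 + 1 by norm_num, Real.Gamma_add_one one_ne_zero, Real.Gamma_one, mul_one]
  have hpos : 0 < Real.Gamma (s/2 + 2) := Real.Gamma_pos_of_pos (by linarith)
  have h1 := Real.GammaSeq_tendsto_Gamma (s + 2)
  have h2 := Real.GammaSeq_tendsto_Gamma 2
  have h3 := Real.GammaSeq_tendsto_Gamma (s/2 + 2)
  have hcomb := (h1.mul h2).div (h3.pow 2) (by positivity)
  have hten : Tendsto (fun n => ∏ j ∈ Finset.range (n + 1), aa s j) atTop
      (𝓝 (Real.Gamma (s + 2) * Real.Gamma 2 / Real.Gamma (s/2 + 2) ^ 2)) := by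
    refine hcomb.congr' ?_
    filter_upwards [eventually_ne_atTop 0] with n hn
    exact (prod_aa_eq_gammaSeq hs n hn).symm
  have := tendsto_nhds_unique hten (tendsto_prod_exp hs)
  rwa [hg2, mul_one] at this


set_option maxHeartbeats 1000000 in
lemma gamma_form {s : ℝ} (hs : |s| < 1) :
    (1/Real.pi) * ((2:ℝ)^(s+2:ℝ)/(s+2) * (2 * (4:ℝ)^((s+1)/2) *
      (Real.Gamma ((s+3)/2)^2 / Real.Gamma (s+3)))) =
    Real.Gamma (s+2) / Real.Gamma (s/2+2)^2 := by
  obtain ⟨hs1, hs2⟩ := abs_lt.mp hs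
  have h2 : (0:ℝ) < 2 := two_pos
  have hπ := Real.pi_pos
  have hr2 : Real.sqrt Real.pi ^ 2 = Real.pi := Real.sq_sqrt Real.pi_pos.le
  have hG2pos : 0 < Real.Gamma (s/2+2) := Real.Gamma_pos_of_pos (by linarith)
  have hGspos : 0 < Real.Gamma (s+2) := Real.Gamma_pos_of_pos (by linarith)
  have hG3pos : 0 < Real.Gamma (s+3) := Real.Gamma_pos_of_pos (by linarith)
  have hΓ3 : Real.Gamma (s+3) = (s+2) * Real.Gamma (s+2) := by
    rw [show s+3 = (s+2)+1 by ring, Real.Gamma_add_one (ne_of_gt (by linarith))]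
  have hdup := Real.Gamma_mul_Gamma_add_half ((s+3)/2)
  rw [show (s+3)/2 + 1/2 = s/2 + 2 by ring, show 2*((s+3)/2) = s + 3 by ring,
    show 1 - (s+3) = -(s+2) by ring] at hdup
  set u := (2:ℝ)^(s+2:ℝ) with hu
  have hupos : 0 < u := Real.rpow_pos_of_pos h2 _
  have e6 : (2:ℝ)^(-(s+2):ℝ) = u⁻¹ := by rw [hu]; exact Real.rpow_neg h2.le (s+2)
  rw [e6] at hdup
  have h22 : (2:ℝ)^(2:ℝ) = 4 := by
    rw [show (2:ℝ) = ((2:ℕ):ℝ) from by norm_num, Real.rpow_natCast]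
    norm_num
  have e4 : (4:ℝ)^((s+1)/2 : ℝ) = (2:ℝ)^(s+1:ℝ) := by
    rw [← h22, ← Real.rpow_mul h2.le, show (2:ℝ)*((s+1)/2) = s+1 by ring]
  have e5 : (4:ℝ)^((s+1)/2 : ℝ) = u/2 := by
    have hadd := Real.rpow_add h2 (s+1) 1
    rw [Real.rpow_one] at hadd
    rw [e4, hu, eq_div_iff (two_ne_zero), ← hadd, show s+1+(1:ℝ) = s+2 by ring]
  have hG1 : Real.Gamma ((s+3)/2) = Real.Gamma (s+3) * u⁻¹ * Real.sqrt Real.pi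
      / Real.Gamma (s/2+2) := by
    rw [eq_div_iff hG2pos.ne']
    exact hdup
  have hG1sq : Real.Gamma ((s+3)/2)^2
      = Real.Gamma (s+3)^2 * (u⁻¹)^2 * Real.pi / Real.Gamma (s/2+2)^2 := by
    rw [hG1, div_pow, mul_pow, mul_pow, hr2]
  set g1 := Real.Gamma (s+2) with hg1
  set g2 := Real.Gamma (s/2+2) with hg2
  have hne1 : Real.pi ≠ 0 := hπ.ne'
  have hne2 : u ≠ 0 := hupos.ne'
  have hne3 : g2 ≠ 0 := hG2pos.ne'
  have hne4 : s+2 ≠ 0 := ne_of_gt (by linarith)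
  have hne5 : g1 ≠ 0 := hGspos.ne'
  rw [hG1sq, e5, hΓ3]
  field_simp


lemma continuous_one_sub_sq_rpow {a : ℝ} (ha : 0 < a) :
    Continuous (fun u : ℝ => (1 - u^2) ^ (a:ℝ)) := by
  rw [continuous_iff_continuousAt]
  intro u
  exact (Real.continuousAt_rpow_const _ _ (Or.inr ha.le)).comp
    (by fun_prop : ContinuousAt (fun u : ℝ => 1 - u^2) u)

lemma beta_eval {a : ℝ} (ha : 0 < a) :
    ∫ x in (0:ℝ)..1, x ^ (a:ℝ) * (1-x) ^ (a:ℝ) = Real.Gamma (a+1)^2 / Real.Gamma (2*a+2) := by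
  have hre : 0 < ((a:ℂ)+1).re := by
    simp only [Complex.add_re, Complex.ofReal_re, Complex.one_re]
    linarith
  have h := Complex.Gamma_mul_Gamma_eq_betaIntegral hre hre
  have key : Complex.betaIntegral ((a:ℂ)+1) ((a:ℂ)+1)
      = ((∫ x in (0:ℝ)..1, x ^ (a:ℝ) * (1-x) ^ (a:ℝ) : ℝ) : ℂ) := by
    rw [Complex.betaIntegral, ← intervalIntegral.integral_ofReal]
    refine intervalIntegral.integral_congr fun x hx => ?_
    rw [Set.uIcc_of_le (by norm_num : (0:ℝ) ≤ 1)] at hx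
    obtain ⟨hx0, hx1⟩ := hx
    rw [add_sub_cancel_right, show ((1:ℂ) - (x:ℝ)) = ((1-x : ℝ) : ℂ) by push_cast; ring,
      ← Complex.ofReal_cpow hx0 a, ← Complex.ofReal_cpow (by linarith) a,
      ← Complex.ofReal_mul]
  rw [key, show ((a:ℂ)+1) + ((a:ℂ)+1) = ((2*a+2 : ℝ) : ℂ) by push_cast; ring,
    show ((a:ℂ)+1) = ((a+1 : ℝ) : ℂ) by push_cast; ring, Complex.Gamma_ofReal,
    Complex.Gamma_ofReal, ← Complex.ofReal_mul, ← Complex.ofReal_mul, Complex.ofReal_inj] at h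
  have hΓpos : 0 < Real.Gamma (2*a+2) := Real.Gamma_pos_of_pos (by linarith)
  rw [eq_div_iff hΓpos.ne', sq]
  linarith [h]

lemma sub_two {a : ℝ} (ha : 0 < a) :
    ∫ u in (-1:ℝ)..1, (1-u^2) ^ (a:ℝ)
      = 2 * (4:ℝ)^(a:ℝ) * ∫ x in (0:ℝ)..1, x ^ (a:ℝ) * (1-x) ^ (a:ℝ) := by
  have hderiv : ∀ x ∈ Set.uIcc (0:ℝ) 1, HasDerivAt (fun x : ℝ => 2*x - 1) 2 x := fun x _ => by
    simpa using ((hasDerivAt_id x).const_mul 2).sub_const 1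
  have hcg := continuous_one_sub_sq_rpow ha
  have h := intervalIntegral.integral_comp_smul_deriv hderiv
    (continuous_const.continuousOn) hcg
  have hend : ∫ x in (2*(0:ℝ)-1)..(2*(1:ℝ)-1), (1-x^2) ^ (a:ℝ)
      = ∫ u in (-1:ℝ)..1, (1-u^2) ^ (a:ℝ) := by norm_num
  rw [hend] at h
  rw [← h]
  rw [show (2 * (4:ℝ)^(a:ℝ) * ∫ x in (0:ℝ)..1, x ^ (a:ℝ) * (1-x) ^ (a:ℝ))
      = ∫ x in (0:ℝ)..1, 2 * (4:ℝ)^(a:ℝ) * (x ^ (a:ℝ) * (1-x) ^ (a:ℝ)) from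
    (intervalIntegral.integral_const_mul _ _).symm]
  refine intervalIntegral.integral_congr fun x hx => ?_
  rw [Set.uIcc_of_le (by norm_num : (0:ℝ) ≤ 1)] at hx
  obtain ⟨hx0, hx1⟩ := hx
  have h1 : (1 - (2*x-1)^2) = 4 * (x * (1-x)) := by ring
  simp only [Function.comp_apply, smul_eq_mul]
  rw [h1, Real.mul_rpow (by norm_num) (by nlinarith), Real.mul_rpow hx0 (by linarith)]
  ring


lemma sub_one {a : ℝ} (ha : 0 < a) (ha2 : a < 1) :
    ∫ θ in (-(Real.pi/2))..(Real.pi/2), Real.cos θ ^ (1 + 2*a : ℝ)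
      = ∫ u in (-1:ℝ)..1, (1-u^2) ^ (a:ℝ) := by
  have hderiv : ∀ x ∈ Set.uIcc (-(Real.pi/2)) (Real.pi/2),
      HasDerivAt Real.sin (Real.cos x) x := fun x _ => Real.hasDerivAt_sin x
  have h := intervalIntegral.integral_comp_smul_deriv hderiv
    Real.continuous_cos.continuousOn (continuous_one_sub_sq_rpow ha)
  have hend : ∫ x in (Real.sin (-(Real.pi/2)))..(Real.sin (Real.pi/2)), (1-x^2) ^ (a:ℝ)
      = ∫ u in (-1:ℝ)..1, (1-u^2) ^ (a:ℝ) := by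
    rw [Real.sin_neg, Real.sin_pi_div_two]
  rw [hend] at h
  rw [← h]
  refine intervalIntegral.integral_congr fun θ hθ => ?_
  have hpi2 : -(Real.pi/2) ≤ Real.pi/2 := by linarith [Real.pi_pos]
  rw [Set.uIcc_of_le hpi2] at hθ
  have hcos : 0 ≤ Real.cos θ := Real.cos_nonneg_of_mem_Icc hθ
  simp only [Function.comp_apply, smul_eq_mul]
  rw [show (1 - Real.sin θ ^ 2) = Real.cos θ ^ 2 from (Real.cos_sq' θ).symm,
    ← Real.rpow_natCast (Real.cos θ) 2, ← Real.rpow_mul hcos]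
  push_cast
  rw [Real.rpow_add' hcos ((by linarith : (0:ℝ) < 1 + 2*a).ne'), Real.rpow_one]

lemma cos_rpow_integral {s : ℝ} (hs : |s| < 1) :
    ∫ θ in (-(Real.pi/2))..(Real.pi/2), Real.cos θ ^ (s+2:ℝ)
      = 2 * (4:ℝ)^((s+1)/2 : ℝ) * (Real.Gamma ((s+3)/2)^2 / Real.Gamma (s+3)) := by
  obtain ⟨hs1, hs2⟩ := abs_lt.mp hs
  have ha : 0 < (s+1)/2 := by linarith
  have ha2 : (s+1)/2 < 1 := by linarith
  have h1 := sub_one ha ha2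
  rw [show (1 + 2*((s+1)/2) : ℝ) = s + 2 by ring] at h1
  rw [h1, sub_two ha, beta_eval ha, show (s+1)/2 + 1 = (s+3)/2 by ring,
    show 2*((s+1)/2) + 2 = s + 3 by ring]


lemma translate_integral (s : ℝ) :
    ∫ x in Metric.closedBall (0:ℂ) 1, ‖x+1‖ ^ s
      = ∫ x in Metric.closedBall (1:ℂ) 1, ‖x‖ ^ s := by
  have hmem : ∀ x : ℂ, x + 1 ∈ Metric.closedBall (1:ℂ) 1 ↔ x ∈ Metric.closedBall (0:ℂ) 1 := by
    intro x
    simp only [Metric.mem_closedBall, Complex.dist_eq]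
    rw [show x + 1 - 1 = x - 0 by ring]
  rw [← MeasureTheory.integral_indicator (measurableSet_closedBall),
    ← MeasureTheory.integral_indicator (measurableSet_closedBall),
    ← integral_add_right_eq_self (Set.indicator (Metric.closedBall (1:ℂ) 1)
      (fun z => ‖z‖ ^ s)) (1:ℂ)]
  congr 1
  funext x
  by_cases hx : x ∈ Metric.closedBall (0:ℂ) 1
  · rw [Set.indicator_of_mem hx, Set.indicator_of_mem ((hmem x).mpr hx)]
  · rw [Set.indicator_of_notMem hx, Set.indicator_of_notMem (fun hc => hx ((hmem x).mp hc))]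

def SS : Set (ℝ × ℝ) :=
  {p | p.2 ∈ Set.Ioo (-(Real.pi/2)) (Real.pi/2) ∧ p.1 ∈ Set.Ioc 0 (2 * Real.cos p.2)}

lemma measurable_SS : MeasurableSet SS := by
  have h1 : MeasurableSet {p : ℝ × ℝ | p.2 ∈ Set.Ioo (-(Real.pi/2)) (Real.pi/2)} :=
    measurable_snd measurableSet_Ioo
  have h2 : MeasurableSet {p : ℝ × ℝ | 0 < p.1} := measurableSet_lt measurable_const measurable_fst
  have h3 : MeasurableSet {p : ℝ × ℝ | p.1 ≤ 2 * Real.cos p.2} :=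
    measurableSet_le measurable_fst (by fun_prop)
  have : SS = {p : ℝ × ℝ | p.2 ∈ Set.Ioo (-(Real.pi/2)) (Real.pi/2)} ∩
      ({p : ℝ × ℝ | 0 < p.1} ∩ {p : ℝ × ℝ | p.1 ≤ 2 * Real.cos p.2}) := by
    ext p
    simp only [SS, Set.mem_setOf_eq, Set.mem_inter_iff, Set.mem_Ioc]
  rw [this]
  exact h1.inter (h2.inter h3)

lemma polar_integral {s : ℝ} (hs : |s| < 1) :
    ∫ x in Metric.closedBall (1:ℂ) 1, ‖x‖ ^ s
      = ∫ p in SS, p.1 ^ (s+1:ℝ) := by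
  obtain ⟨hs1, hs2⟩ := abs_lt.mp hs
  set F : ℂ → ℝ := Set.indicator (Metric.closedBall (1:ℂ) 1)
    (fun z => ‖z‖ ^ s) with hF
  have h0 : ∫ x in Metric.closedBall (1:ℂ) 1, ‖x‖ ^ s = ∫ z, F z :=
    (MeasureTheory.integral_indicator measurableSet_closedBall).symm
  rw [h0, ← Complex.integral_comp_polarCoord_symm F]
  set W : Set (ℝ × ℝ) := {p | p.1^2 ≤ 2 * p.1 * Real.cos p.2} with hW
  have hWmeas : MeasurableSet W := measurableSet_le (by fun_prop) (by fun_prop)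
  have hmem : ∀ p : ℝ × ℝ, Complex.polarCoord.symm p ∈ Metric.closedBall (1:ℂ) 1 ↔ p ∈ W := by
    intro p
    rw [Metric.mem_closedBall, Complex.dist_eq]
    rw [← pow_le_one_iff_of_nonneg (norm_nonneg _) (two_ne_zero), Complex.sq_norm]
    have hre : (Complex.polarCoord.symm p - 1).re = p.1 * Real.cos p.2 - 1 := by
      rw [Complex.polarCoord_symm_apply]
      simp [Complex.cos_ofReal_re, Complex.sin_ofReal_re]
    have him : (Complex.polarCoord.symm p - 1).im = p.1 * Real.sin p.2 := by
      rw [Complex.polarCoord_symm_apply]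
      simp [Complex.cos_ofReal_re, Complex.sin_ofReal_re]
    rw [Complex.normSq_apply, hre, him, hW, Set.mem_setOf_eq]
    have hpyth := Real.sin_sq_add_cos_sq p.2
    constructor
    · intro h; nlinarith
    · intro h; nlinarith
  have hsmul : (fun p : ℝ × ℝ => p.1 • F (Complex.polarCoord.symm p))
      = Set.indicator W (fun p : ℝ × ℝ =>
          p.1 * ‖Complex.polarCoord.symm p‖ ^ s) := by
    funext p
    by_cases hp : p ∈ W
    · rw [Set.indicator_of_mem hp, hF, Set.indicator_of_mem ((hmem p).mpr hp), smul_eq_mul]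
    · rw [Set.indicator_of_notMem hp, hF,
        Set.indicator_of_notMem (fun hc => hp ((hmem p).mp hc)), smul_zero]
  rw [hsmul, MeasureTheory.setIntegral_indicator hWmeas]
  have hset : polarCoord.target ∩ W = SS := by
    ext p
    rw [polarCoord_target]
    simp only [Set.mem_inter_iff, Set.mem_prod, Set.mem_Ioi, Set.mem_Ioo, hW, Set.mem_setOf_eq,
      SS, Set.mem_Ioc]
    constructor
    · rintro ⟨⟨hr, hθ1, hθ2⟩, hw⟩
      have hrc : p.1 ≤ 2 * Real.cos p.2 := by nlinarith
      have hcpos : 0 < Real.cos p.2 := by nlinarith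
      have hπ := Real.pi_pos
      refine ⟨⟨?_, ?_⟩, hr, hrc⟩
      · by_contra hc
        push_neg at hc
        have h1 : Real.pi/2 ≤ -p.2 := by linarith
        have h2 : -p.2 ≤ Real.pi + Real.pi/2 := by linarith
        have := Real.cos_nonpos_of_pi_div_two_le_of_le h1 h2
        rw [Real.cos_neg] at this
        linarith
      · by_contra hc
        push_neg at hc
        have := Real.cos_nonpos_of_pi_div_two_le_of_le hc (by linarith)
        linarith
    · rintro ⟨⟨hθ1, hθ2⟩, hr, hrc⟩
      have hπ := Real.pi_pos
      exact ⟨⟨hr, by linarith, by linarith⟩, by nlinarith⟩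
  rw [hset]
  refine MeasureTheory.setIntegral_congr_fun measurable_SS fun p hp => ?_
  have hrpos : 0 < p.1 := hp.2.1
  rw [Complex.norm_polarCoord_symm, abs_of_pos hrpos, Real.rpow_add hrpos, Real.rpow_one]
  ring


lemma two_rpow_two : (2:ℝ)^(2:ℝ) = 4 := by
  rw [show (2:ℝ) = ((2:ℕ):ℝ) from by norm_num, Real.rpow_natCast]
  norm_num

lemma continuous_rpow_plus {c : ℝ} (hc : 0 ≤ c) : Continuous (fun x : ℝ => x ^ (c:ℝ)) :=
  continuous_iff_continuousAt.mpr fun x => Real.continuousAt_rpow_const x c (Or.inr hc)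

lemma integrable_ind {s : ℝ} (hs : |s| < 1) :
    Integrable (Set.indicator SS (fun p : ℝ × ℝ => p.1 ^ (s+1:ℝ))) volume := by
  obtain ⟨hs1, hs2⟩ := abs_lt.mp hs
  have hmf : Measurable (fun p : ℝ × ℝ => p.1 ^ (s+1:ℝ)) :=
    ((continuous_rpow_plus (by linarith : (0:ℝ) ≤ s+1)).comp continuous_fst).measurable
  have hbox : MeasurableSet (Set.Ioc (0:ℝ) 2 ×ˢ Set.Ioo (-(Real.pi/2)) (Real.pi/2)) :=
    measurableSet_Ioc.prod measurableSet_Ioo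
  have hg : Integrable (Set.indicator (Set.Ioc (0:ℝ) 2 ×ˢ Set.Ioo (-(Real.pi/2)) (Real.pi/2))
      (fun _ => (4:ℝ))) volume := by
    rw [integrable_indicator_iff hbox]
    refine (integrableOn_const_iff).mpr (Or.inr ?_)
    rw [Measure.volume_eq_prod, Measure.prod_prod, Real.volume_Ioc, Real.volume_Ioo]
    exact ENNReal.mul_lt_top ENNReal.ofReal_lt_top ENNReal.ofReal_lt_top
  refine hg.mono ((hmf.indicator measurable_SS).aestronglyMeasurable) (ae_of_all _ fun p => ?_)
  by_cases hp : p ∈ SS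
  · obtain ⟨hθ, hr0, hrc⟩ := id hp
    have hcos1 : Real.cos p.2 ≤ 1 := Real.cos_le_one p.2
    have hr2 : p.1 ≤ 2 := by linarith
    have hbox' : p ∈ Set.Ioc (0:ℝ) 2 ×ˢ Set.Ioo (-(Real.pi/2)) (Real.pi/2) :=
      ⟨⟨hr0, hr2⟩, hθ⟩
    rw [Set.indicator_of_mem hp, Set.indicator_of_mem hbox']
    rw [Real.norm_eq_abs, Real.norm_eq_abs, abs_of_pos (Real.rpow_pos_of_pos hr0 _),
      abs_of_pos (by norm_num : (0:ℝ) < 4)]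
    calc p.1 ^ (s+1:ℝ) ≤ (2:ℝ) ^ (s+1:ℝ) := Real.rpow_le_rpow hr0.le hr2 (by linarith)
      _ ≤ (2:ℝ) ^ (2:ℝ) := Real.rpow_le_rpow_of_exponent_le one_le_two (by linarith)
      _ = 4 := two_rpow_two
  · rw [Set.indicator_of_notMem hp, norm_zero]
    exact norm_nonneg _


lemma fubini_step {s : ℝ} (hs : |s| < 1) :
    ∫ p in SS, p.1 ^ (s+1:ℝ)
      = ∫ θ in Set.Ioo (-(Real.pi/2)) (Real.pi/2), (2 * Real.cos θ) ^ (s+2:ℝ) / (s+2) := by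
  obtain ⟨hs1, hs2⟩ := abs_lt.mp hs
  set φ : ℝ × ℝ → ℝ := Set.indicator SS (fun p : ℝ × ℝ => p.1 ^ (s+1:ℝ)) with hφ
  have hint : Integrable φ volume := integrable_ind hs
  have hint' : Integrable φ (volume.prod volume) := by
    rwa [← Measure.volume_eq_prod]
  have huncurry : Function.uncurry (fun x y => φ (x, y)) = φ := by
    funext p
    simp [Function.uncurry]
  have hswap : ∫ x, ∫ y, φ (x, y) = ∫ y, ∫ x, φ (x, y) := by
    apply MeasureTheory.integral_integral_swap
    rwa [huncurry]
  have h1 : ∫ p in SS, p.1 ^ (s+1:ℝ) = ∫ p, φ p :=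
    (MeasureTheory.integral_indicator measurable_SS).symm
  have h2 : ∫ p, φ p = ∫ x, ∫ y, φ (x, y) := by
    rw [Measure.volume_eq_prod]
    exact MeasureTheory.integral_prod φ hint'
  have hinner : ∀ θ : ℝ, (∫ r, φ (r, θ))
      = Set.indicator (Set.Ioo (-(Real.pi/2)) (Real.pi/2))
          (fun θ => (2 * Real.cos θ) ^ (s+2:ℝ) / (s+2)) θ := by
    intro θ
    by_cases hθ : θ ∈ Set.Ioo (-(Real.pi/2)) (Real.pi/2)
    · have hcos : 0 < Real.cos θ := Real.cos_pos_of_mem_Ioo hθ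
      have hφθ : (fun r => φ (r, θ))
          = Set.indicator (Set.Ioc 0 (2 * Real.cos θ)) (fun r => r ^ (s+1:ℝ)) := by
        funext r
        by_cases hr : r ∈ Set.Ioc 0 (2 * Real.cos θ)
        · rw [Set.indicator_of_mem hr, hφ]
          exact Set.indicator_of_mem (show (r, θ) ∈ SS from ⟨hθ, hr⟩) _
        · rw [Set.indicator_of_notMem hr, hφ]
          exact Set.indicator_of_notMem (fun hc : (r, θ) ∈ SS => hr hc.2) _
      rw [hφθ, MeasureTheory.integral_indicator measurableSet_Ioc,
        ← intervalIntegral.integral_of_le (by nlinarith : (0:ℝ) ≤ 2 * Real.cos θ),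
        integral_rpow (Or.inl (by linarith : (-1:ℝ) < s+1)),
        Set.indicator_of_mem hθ, Real.zero_rpow (by linarith : s+1+1 ≠ 0),
        show s+1+1 = s+2 by ring]
      ring
    · have hφθ : (fun r => φ (r, θ)) = fun _ => (0:ℝ) := by
        funext r
        rw [hφ, Set.indicator_of_notMem (fun hc => hθ hc.1)]
      rw [hφθ, Set.indicator_of_notMem hθ, integral_zero]
  rw [h1, h2, hswap, ← MeasureTheory.integral_indicator measurableSet_Ioo]
  exact integral_congr_ae (ae_of_all _ hinner)

lemma glue_const {s : ℝ} (hs : |s| < 1) :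
    ∫ θ in Set.Ioo (-(Real.pi/2)) (Real.pi/2), (2 * Real.cos θ) ^ (s+2:ℝ) / (s+2)
      = (2:ℝ)^(s+2:ℝ)/(s+2) * ∫ θ in (-(Real.pi/2))..(Real.pi/2), Real.cos θ ^ (s+2:ℝ) := by
  have hπ := Real.pi_pos
  have hle : -(Real.pi/2) ≤ Real.pi/2 := by linarith
  rw [← MeasureTheory.integral_Ioc_eq_integral_Ioo, ← intervalIntegral.integral_of_le hle]
  rw [show ((2:ℝ)^(s+2:ℝ)/(s+2) * ∫ θ in (-(Real.pi/2))..(Real.pi/2), Real.cos θ ^ (s+2:ℝ))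
      = ∫ θ in (-(Real.pi/2))..(Real.pi/2), (2:ℝ)^(s+2:ℝ)/(s+2) * Real.cos θ ^ (s+2:ℝ) from
    (intervalIntegral.integral_const_mul _ _).symm]
  refine intervalIntegral.integral_congr fun θ hθ => ?_
  rw [Set.uIcc_of_le hle] at hθ
  have hcos : 0 ≤ Real.cos θ := Real.cos_nonneg_of_mem_Icc hθ
  rw [Real.mul_rpow (by norm_num) hcos]
  ring

/-- The areal zeta Mahler measure of `x + 1` for `|s| < 1`:
`(1/π) ∫_D |x+1|^s dA(x) = exp(Σ_{j≥2} ((−1)^j/j)(1 − 2^{1−j})(ζ(j) − 1) s^j)`. -/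
theorem arealZetaMahler_x_add_one_exp (s : ℝ) (hs : |s| < 1) :
    (1 / Real.pi) *
      ∫ x in Metric.closedBall (0 : ℂ) 1, ‖x + 1‖ ^ s =
    Real.exp
      (∑' j : ℕ,
        ((-1 : ℝ) ^ (j + 2) / ((j : ℝ) + 2)) * (1 - (2 : ℝ) ^ ((1 : ℤ) - ((j : ℤ) + 2))) *
          (zetaVal (j + 2) - 1) * s ^ (j + 2)) := by
  rw [translate_integral, polar_integral hs, fubini_step hs, glue_const hs,
    cos_rpow_integral hs, gamma_form hs, gamma_ratio_eq_exp hs]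
  congr 1
  exact tsum_congr fun k => by rw [ca]; ring
end

section
/- Let h > 2 be an integer and let α, β ∈ ℂ with |α| ≤ 1, |β| ≤ 1, and α ≠ 1. Then Σ_{b=2}^{∞} (β^b / b^{h+1}) Σ_{a=1}^{b−1} a α^a = (1/(α−1)²) ( α Li_h(αβ) − α Li_{h+1}(αβ) − Li_h(αβ) + α Li_{h+1}(β) ), where Li_k(z) = Σ_{n=1}^{∞} z^n/n^k denotes the k-th polylogarithm. -/
/-!
Summing by parts in closed form, `(α - 1)² Σ_{a=1}^{b-1} a α^a = α - b α^b + (b - 1) α^{b+1}`,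
so each term of the double sum is a combination of `β^b/b^{h+1}`, `(αβ)^b/b^h` and
`(αβ)^b/b^{h+1}`. Summing over `b ≥ 2` gives polylogarithms with their first term removed,
and those first terms cancel.
-/

/-- The `k`-th polylogarithm `Li_k(z) = Σ_{n≥1} z^n/n^k`. -/
noncomputable def polyLog (k : ℕ) (z : ℂ) : ℂ := ∑' n : ℕ, z ^ (n + 1) / ((n : ℂ) + 1) ^ k

theorem summable_polyLog {k : ℕ} (hk : 1 < k) {z : ℂ} (hz : ‖z‖ ≤ 1) :
    Summable fun n : ℕ => z ^ (n + 1) / ((n : ℂ) + 1) ^ k := by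
  refine .of_norm_bounded (summable_pow_div_add (1 : ℂ) k 1 hk) fun n => ?_
  rw [norm_div, norm_div, norm_pow z, norm_one, Nat.cast_one]
  gcongr
  exact pow_le_one₀ (norm_nonneg z) hz

theorem hasSum_polyLog_tail {k : ℕ} (hk : 1 < k) {z : ℂ} (hz : ‖z‖ ≤ 1) :
    HasSum (fun n : ℕ => z ^ (n + 2) / ((n : ℂ) + 2) ^ k) (polyLog k z - z) := by
  have := (hasSum_nat_add_iff' 1).mpr (summable_polyLog hk hz).hasSum
  simpa [polyLog, add_assoc, one_add_one_eq_two] using this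

theorem sum_Icc_mul_pow_mul_sub_one_sq {R : Type*} [CommRing R] (x : R) (n : ℕ) :
    (∑ a ∈ Finset.Icc 1 n, (a : R) * x ^ a) * (x - 1) ^ 2
      = x - ((n : R) + 1) * x ^ (n + 1) + n * x ^ (n + 2) := by
  induction n with
  | zero => simp
  | succ n ih =>
    rw [Finset.sum_Icc_succ_top (by omega), add_mul, ih]
    push_cast
    ring

theorem pow_div_mul_sum_Icc_mul_pow {K : Type*} [Field K] [CharZero K] (x y : K) (k n : ℕ) :
    (y ^ (n + 2) / ((n : K) + 2) ^ (k + 1)) * (∑ a ∈ Finset.Icc 1 (n + 1), (a : K) * x ^ a)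
        * (x - 1) ^ 2
      = x * (y ^ (n + 2) / ((n : K) + 2) ^ (k + 1))
        + (x - 1) * ((x * y) ^ (n + 2) / ((n : K) + 2) ^ k)
        - x * ((x * y) ^ (n + 2) / ((n : K) + 2) ^ (k + 1)) := by
  have hn : (n : K) + 2 ≠ 0 := by exact_mod_cast (n + 1).succ_ne_zero
  rw [mul_assoc, sum_Icc_mul_pow_mul_sub_one_sq]
  field_simp
  push_cast
  ring

/-- For `h > 2`, `|α|, |β| ≤ 1`, `α ≠ 1`:
`Σ_{b≥2} (β^b/b^{h+1}) Σ_{a=1}^{b−1} a α^a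
  = (1/(α−1)²)(α Li_h(αβ) − α Li_{h+1}(αβ) − Li_h(αβ) + α Li_{h+1}(β))`. -/
theorem polylog_double_sum (h : ℕ) (hh : 2 < h) (α β : ℂ)
    (hα : ‖α‖ ≤ 1) (hβ : ‖β‖ ≤ 1) (hα1 : α ≠ 1) :
    (∑' b : ℕ,
        (β ^ (b + 2) / ((b : ℂ) + 2) ^ (h + 1)) *
          ∑ a ∈ Finset.Icc 1 (b + 1), (a : ℂ) * α ^ a) =
    (1 / (α - 1) ^ 2) *
      (α * polyLog h (α * β) - α * polyLog (h + 1) (α * β) - polyLog h (α * β)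
        + α * polyLog (h + 1) β) := by
  have hα1' : (α - 1) ^ 2 ≠ 0 := pow_ne_zero 2 (sub_ne_zero.2 hα1)
  have hαβ : ‖α * β‖ ≤ 1 := by simpa using mul_le_one₀ hα (norm_nonneg β) hβ
  have hsum := (((hasSum_polyLog_tail (k := h + 1) (by omega) hβ).mul_left α).add
    ((hasSum_polyLog_tail (k := h) (by omega) hαβ).mul_left (α - 1))).sub
    ((hasSum_polyLog_tail (k := h + 1) (by omega) hαβ).mul_left α)
  simp_rw [← pow_div_mul_sum_Icc_mul_pow α β h] at hsum
  have hsum' := hsum.div_const ((α - 1) ^ 2)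
  simp_rw [mul_div_cancel_right₀ _ hα1'] at hsum'
  rw [hsum'.tsum_eq]
  field_simp
  ring
end

section
/- ∫_{0}^{π/3} cos²θ · log(2 cos θ) dθ = (3√3/16) L(χ_{−3}, 2) + π/12 − √3/16, where L(χ_{−3}, 2) = Σ_{n=1}^{∞} χ_{−3}(n)/n² and χ_{−3}(n) = 1 if n ≡ 1 (mod 3), χ_{−3}(n) = −1 if n ≡ 2 (mod 3), and χ_{−3}(n) = 0 if n ≡ 0 (mod 3). -/
open Real MeasureTheory Filter

/-! Auxiliary definitions and lemmas -/

noncomputable def cc (n : ℕ) : ℝ := if n % 3 = 1 then 1 else if n % 3 = 2 then -1 else 0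
lemma summable_inv_sq_s17 : Summable (fun n : ℕ => ((n:ℝ)^2)⁻¹) := by
  simpa using Real.summable_one_div_nat_pow.mpr one_lt_two

lemma cc_abs (n : ℕ) : |cc n| ≤ 1 := by
  unfold cc; split_ifs <;> norm_num

lemma div_sq_norm_le (a : ℝ) (ha : |a| ≤ 1) (n : ℕ) : ‖a / (n:ℝ)^2‖ ≤ ((n:ℝ)^2)⁻¹ := by
  rcases Nat.eq_zero_or_pos n with rfl | hn
  · simp
  have hn2 : (0:ℝ) < (n:ℝ)^2 := by positivity
  rw [Real.norm_eq_abs, abs_div, abs_of_nonneg hn2.le, div_eq_mul_inv]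
  calc |a| * ((n:ℝ)^2)⁻¹ ≤ 1 * ((n:ℝ)^2)⁻¹ := by gcongr
    _ = ((n:ℝ)^2)⁻¹ := one_mul _

lemma summable_cc : Summable (fun n : ℕ => cc n / (n:ℝ)^2) :=
  Summable.of_norm_bounded summable_inv_sq_s17 (fun n => div_sq_norm_le _ (cc_abs n) n)

lemma cc_two_mul (m : ℕ) : cc (2*m) / ((2*m:ℕ):ℝ)^2 = -(1/4) * (cc m / (m:ℝ)^2) := by
  rcases Nat.eq_zero_or_pos m with rfl | hm
  · simp [cc]
  have h3 : m % 3 = 0 ∨ m % 3 = 1 ∨ m % 3 = 2 := by omega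
  have key : cc (2*m) = -cc m := by
    unfold cc
    rcases h3 with h | h | h <;>
      · have h2 : (2*m) % 3 = (2 * (m % 3)) % 3 := by omega
        rw [h2, h]; norm_num
  have h4 : ((2*m:ℕ):ℝ) = 2 * m := by push_cast; ring
  have hm' : (m:ℝ) ≠ 0 := Nat.cast_ne_zero.mpr hm.ne'
  have gen : ∀ x : ℝ, -x / (2*(m:ℝ))^2 = -(1/4) * (x/(m:ℝ)^2) := by
    intro x; ring
  rw [key, h4, neg_div, ← neg_div, gen]

lemma neg_one_pow_even (k : ℕ) : (-1:ℝ)^(2*k+1) = -1 := by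
  rw [pow_succ, pow_mul]; norm_num

lemma neg_one_pow_odd (k : ℕ) : (-1:ℝ)^((2*k+1)+1) = 1 := by
  rw [pow_succ, neg_one_pow_even]; norm_num

lemma alt_sum_eq : ∑' n : ℕ, (-1:ℝ)^(n+1) * (cc n / (n:ℝ)^2)
    = (3/2) * ∑' n : ℕ, cc n / (n:ℝ)^2 := by
  set A := ∑' n : ℕ, cc n / (n:ℝ)^2 with hA
  have hsum := summable_cc
  have hseven : Summable (fun k : ℕ => cc (2*k) / ((2*k:ℕ):ℝ)^2) := by
    simp_rw [cc_two_mul]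
    exact hsum.mul_left _
  have hsodd : Summable (fun k : ℕ => cc (2*k+1) / ((2*k+1:ℕ):ℝ)^2) := by
    apply Summable.of_norm_bounded (summable_inv_sq_s17.comp_injective
      (i := fun k : ℕ => 2*k+1) (by intro a b h; simp only at h; omega))
    intro k
    exact div_sq_norm_le _ (cc_abs _) _
  have heven_val : ∑' k : ℕ, cc (2*k) / ((2*k:ℕ):ℝ)^2 = -(1/4) * A := by
    simp_rw [cc_two_mul]; rw [tsum_mul_left]
  have hA_split := tsum_even_add_odd hseven hsodd (f := fun n => cc n / (n:ℝ)^2)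
  have hodd_val : ∑' k : ℕ, cc (2*k+1) / ((2*k+1:ℕ):ℝ)^2 = A + (1/4) * A := by
    rw [heven_val] at hA_split
    linarith [hA_split]
  have hBeven : Summable (fun k : ℕ => (-1:ℝ)^((2*k)+1) * (cc (2*k) / ((2*k:ℕ):ℝ)^2)) := by
    simp_rw [neg_one_pow_even, neg_one_mul]
    exact hseven.neg
  have hBodd : Summable (fun k : ℕ => (-1:ℝ)^((2*k+1)+1) * (cc (2*k+1) / ((2*k+1:ℕ):ℝ)^2)) := by
    simp_rw [neg_one_pow_odd, one_mul]
    exact hsodd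
  have hB_split := tsum_even_add_odd hBeven hBodd
    (f := fun n => (-1:ℝ)^(n+1) * (cc n / (n:ℝ)^2))
  rw [← hB_split]
  have e1 : ∑' k : ℕ, (-1:ℝ)^((2*k)+1) * (cc (2*k) / ((2*k:ℕ):ℝ)^2)
      = -∑' k : ℕ, cc (2*k) / ((2*k:ℕ):ℝ)^2 := by
    rw [← tsum_neg]
    congr 1; funext k
    rw [neg_one_pow_even, neg_one_mul]
  have e2 : ∑' k : ℕ, (-1:ℝ)^((2*k+1)+1) * (cc (2*k+1) / ((2*k+1:ℕ):ℝ)^2)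
      = ∑' k : ℕ, cc (2*k+1) / ((2*k+1:ℕ):ℝ)^2 := by
    congr 1; funext k
    rw [neg_one_pow_odd, one_mul]
  rw [e1, e2, heven_val, hodd_val]
  ring
lemma sin_two_k_pi_div_three (k : ℕ) : Real.sin (2*k*π/3) = (Real.sqrt 3 / 2) * cc k := by
  obtain ⟨q, r, hr, rfl⟩ : ∃ q r, r < 3 ∧ k = 3*q + r := ⟨k/3, k%3, Nat.mod_lt _ (by norm_num), by omega⟩
  have harg : 2*((3*q+r:ℕ):ℝ)*π/3 = 2*r*π/3 + q * (2*π) := by push_cast; ring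
  rw [harg, Real.sin_add_nat_mul_two_pi]
  have hmod : (3*q+r) % 3 = r := by omega
  interval_cases r
  · simp [cc, hmod]
  · rw [show 2*(1:ℕ)*π/3 = π - π/3 by push_cast; ring, Real.sin_pi_sub, Real.sin_pi_div_three]
    simp [cc, hmod]
  · rw [show 2*(2:ℕ)*π/3 = π/3 + π by push_cast; ring, Real.sin_add_pi, Real.sin_pi_div_three]
    simp [cc, hmod]
lemma cos_ge_half {θ : ℝ} (hθ : θ ∈ Set.uIcc (0:ℝ) (π/3)) : 1/2 ≤ Real.cos θ := by
  rw [Set.uIcc_of_le (by positivity)] at hθ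
  have h := Real.cos_le_cos_of_nonneg_of_le_pi hθ.1
    (by linarith [Real.pi_pos] : π/3 ≤ π) hθ.2
  rwa [Real.cos_pi_div_three] at h

lemma elem_part :
    ∫ θ in (0:ℝ)..(π/3), (Real.cos θ^2 - 1/2) * Real.log (2*Real.cos θ)
      = π/12 - Real.sqrt 3/16 := by
  have hd : ∀ θ ∈ Set.uIcc (0:ℝ) (π/3),
      HasDerivAt (fun θ => (Real.sin (2*θ)/4) * Real.log (2*Real.cos θ) + (θ/4 - Real.sin (2*θ)/8))
        ((Real.cos θ^2 - 1/2) * Real.log (2*Real.cos θ)) θ := by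
    intro θ hθ
    have hcθ : Real.cos θ ≠ 0 := by linarith [cos_ge_half hθ]
    have h2c : (2:ℝ) * Real.cos θ ≠ 0 := by simpa using hcθ
    have hsin2 : HasDerivAt (fun θ : ℝ => Real.sin (2*θ)) (Real.cos (2*θ) * 2) θ := by
      simpa [Function.comp_def] using (Real.hasDerivAt_sin (2*θ)).comp θ ((hasDerivAt_id θ).const_mul 2)
    have hlog : HasDerivAt (fun θ : ℝ => Real.log (2*Real.cos θ))
        ((2 * -Real.sin θ) / (2 * Real.cos θ)) θ :=
      ((Real.hasDerivAt_cos θ).const_mul 2).log h2c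
    have h := ((hsin2.div_const 4).mul hlog).add
      (((hasDerivAt_id θ).div_const 4).sub (hsin2.div_const 8))
    refine h.congr_deriv ?_
    symm
    rw [Real.cos_two_mul, Real.sin_two_mul]
    have hs : Real.sin θ^2 = 1 - Real.cos θ^2 := Real.sin_sq θ
    have key : Real.cos θ * Real.sin θ^2 = Real.cos θ - Real.cos θ^3 := by
      rw [hs]; ring
    field_simp
    ring_nf
    nlinarith [key]
  have hint : IntervalIntegrable (fun θ => (Real.cos θ^2 - 1/2) * Real.log (2*Real.cos θ))
      MeasureTheory.volume 0 (π/3) := by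
    apply ContinuousOn.intervalIntegrable
    apply ContinuousOn.mul
    · exact (Continuous.continuousOn (by continuity))
    · apply ContinuousOn.log
      · exact Continuous.continuousOn (by continuity)
      · intro θ hθ; have := cos_ge_half hθ; positivity
  rw [intervalIntegral.integral_eq_sub_of_hasDerivAt hd hint]
  have h1 : Real.sin (2*(π/3)) = Real.sqrt 3 / 2 := by
    rw [show 2*(π/3) = π - π/3 by ring, Real.sin_pi_sub, Real.sin_pi_div_three]
  have h2 : Real.cos (π/3) = 1/2 := Real.cos_pi_div_three
  simp [h1, h2]
  ring
lemma hasSum_log_abs (r θ : ℝ) (hr : |r| < 1) :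
    HasSum (fun k : ℕ => (-1:ℝ)^(k+1) * r^k * Real.cos (2*k*θ) / k)
      (Real.log (‖1 + (r:ℂ) * Complex.exp ((2*θ:ℝ) * Complex.I)‖)) := by
  set z : ℂ := (r:ℂ) * Complex.exp ((2*θ:ℝ) * Complex.I) with hzdef
  have hz : ‖z‖ < 1 := by
    rw [hzdef, norm_mul, Complex.norm_exp_ofReal_mul_I, mul_one, Complex.norm_real]
    exact hr
  have h := (Complex.hasSum_taylorSeries_log hz).mapL Complex.reCLM
  convert h using 2 with k
  · have hzk : z^k = ((r^k : ℝ) : ℂ) * Complex.exp (((2*k*θ : ℝ)) * Complex.I) := by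
      rw [hzdef, mul_pow, ← Complex.exp_nat_mul]
      push_cast
      ring_nf
    have key : (-1:ℂ)^(k+1) * z^k / k
        = (( ((-1:ℝ)^(k+1) * r^k / k : ℝ)) : ℂ) * Complex.exp (((2*k*θ : ℝ)) * Complex.I) := by
      rw [hzk]; push_cast; ring
    rw [Complex.reCLM_apply, key, Complex.re_ofReal_mul, Complex.exp_ofReal_mul_I_re]
    ring
  · rw [Complex.reCLM_apply, Complex.log_re]

lemma integral_cos_smul (c b : ℝ) (hc : c ≠ 0) :
    ∫ θ in (0:ℝ)..b, Real.cos (c*θ) = Real.sin (c*b) / c := by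
  rw [intervalIntegral.integral_comp_mul_left (fun x => Real.cos x) hc]
  simp [integral_cos, div_eq_inv_mul]

lemma integral_term (r : ℝ) (k : ℕ) :
    ∫ θ in (0:ℝ)..(π/3), (-1:ℝ)^(k+1) * r^k * Real.cos (2*k*θ) / k
      = (-1:ℝ)^(k+1) * r^k * Real.sin (2*k*π/3) / (2*k^2) := by
  rcases Nat.eq_zero_or_pos k with rfl | hk
  · simp
  have hk' : (2*(k:ℝ)) ≠ 0 := by positivity
  have : ∀ θ : ℝ, (-1:ℝ)^(k+1) * r^k * Real.cos (2*k*θ) / k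
      = ((-1:ℝ)^(k+1) * r^k / k) * Real.cos ((2*(k:ℝ))*θ) := by
    intro θ; ring
  simp_rw [this]
  rw [intervalIntegral.integral_const_mul, integral_cos_smul _ _ hk']
  have h1 : 2*(k:ℝ)*(π/3) = 2*(k:ℝ)*π/3 := by ring
  rw [h1]
  rw [div_mul_div_comm]
  congr 1
  ring

lemma integral_phi (r : ℝ) (hr0 : 0 ≤ r) (hr : r < 1) :
    (∫ θ in (0:ℝ)..(π/3),
        Real.log (‖1 + (r:ℂ) * Complex.exp ((2*θ:ℝ) * Complex.I)‖))
      = ∑' k : ℕ, (-1:ℝ)^(k+1) * r^k * Real.sin (2*k*π/3) / (2*k^2) := by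
  have habs : |r| < 1 := by rw [abs_of_nonneg hr0]; exact hr
  set F : ℕ → ℝ → ℝ := fun k θ => (-1:ℝ)^(k+1) * r^k * Real.cos (2*k*θ) / k with hF
  have hcont : ∀ k, Continuous (F k) := by
    intro k; rw [hF]; fun_prop
  have hptwise : ∀ θ : ℝ,
      Real.log (‖1 + (r:ℂ) * Complex.exp ((2*θ:ℝ) * Complex.I)‖)
        = ∑' k, F k θ := fun θ => ((hasSum_log_abs r θ habs).tsum_eq).symm
  have hle : (0:ℝ) ≤ π/3 := by positivity
  have hnormle : ∀ k, ∀ θ : ℝ, ‖F k θ‖ ≤ r^k := by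
    intro k θ
    rcases Nat.eq_zero_or_pos k with rfl | hk
    · simp [hF]
    rw [hF]
    simp only [Real.norm_eq_abs, abs_div, abs_mul, abs_pow, abs_neg, abs_one, one_pow, one_mul,
      abs_of_nonneg hr0, Nat.abs_cast]
    calc r^k * |Real.cos (2*k*θ)| / (k:ℝ) ≤ r^k * 1 / 1 := by
          apply div_le_div₀ (by positivity) _ one_pos (by exact_mod_cast hk)
          exact mul_le_mul_of_nonneg_left (Real.abs_cos_le_one _) (by positivity)
      _ = r^k := by ring
  have hInt : ∀ k, IntegrableOn (F k) (Set.Ioc (0:ℝ) (π/3)) volume :=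
    fun k => (hcont k).integrableOn_Ioc
  have hmeas : (volume (Set.Ioc (0:ℝ) (π/3))).toReal = π/3 := by
    rw [Real.volume_Ioc]; rw [ENNReal.toReal_ofReal (by linarith [Real.pi_pos])]; ring
  have hbound : ∀ k, (∫ θ in Set.Ioc (0:ℝ) (π/3), ‖F k θ‖) ≤ (π/3) * r^k := by
    intro k
    have h1 : (∫ θ in Set.Ioc (0:ℝ) (π/3), ‖F k θ‖)
        ≤ ‖∫ θ in Set.Ioc (0:ℝ) (π/3), ‖F k θ‖‖ := le_abs_self _
    refine h1.trans ?_
    have := MeasureTheory.norm_setIntegral_le_of_norm_le_const (C := r^k)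
      (s := Set.Ioc (0:ℝ) (π/3)) (f := fun θ => ‖F k θ‖)
      (by rw [Real.volume_Ioc]; exact ENNReal.ofReal_lt_top)
      (fun θ _ => by rw [norm_norm]; exact hnormle k θ)
    unfold Measure.real at this
    rw [hmeas] at this
    linarith [this]
  have hsummable : Summable (fun k => ∫ θ in Set.Ioc (0:ℝ) (π/3), ‖F k θ‖) := by
    apply Summable.of_nonneg_of_le
      (fun k => MeasureTheory.integral_nonneg (fun θ => norm_nonneg _)) hbound
    exact (summable_geometric_of_lt_one hr0 hr).mul_left _
  rw [intervalIntegral.integral_of_le hle]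
  calc (∫ θ in Set.Ioc (0:ℝ) (π/3),
        Real.log (‖1 + (r:ℂ) * Complex.exp ((2*θ:ℝ) * Complex.I)‖))
      = ∫ θ in Set.Ioc (0:ℝ) (π/3), ∑' k, F k θ := by
        apply MeasureTheory.integral_congr_ae
        exact Filter.Eventually.of_forall (fun θ => hptwise θ)
    _ = ∑' k, ∫ θ in Set.Ioc (0:ℝ) (π/3), F k θ :=
        (MeasureTheory.integral_tsum_of_summable_integral_norm hInt hsummable).symm
    _ = ∑' k : ℕ, (-1:ℝ)^(k+1) * r^k * Real.sin (2*k*π/3) / (2*k^2) := by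
        congr 1; funext k
        rw [← intervalIntegral.integral_of_le hle]
        exact integral_term r k

lemma normSq_one_add (r θ : ℝ) :
    Complex.normSq (1 + (r:ℂ) * Complex.exp ((2*θ:ℝ) * Complex.I))
      = 1 + 2*r*Real.cos (2*θ) + r^2 := by
  rw [Complex.normSq_apply]
  simp only [Complex.add_re, Complex.add_im, Complex.one_re, Complex.one_im,
    Complex.mul_re, Complex.mul_im, Complex.ofReal_re, Complex.ofReal_im,
    Complex.exp_ofReal_mul_I_re, Complex.exp_ofReal_mul_I_im]
  nlinarith [Real.sin_sq_add_cos_sq (2*θ)]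

lemma abs_one_add_exp {θ : ℝ} (hθ : 0 ≤ Real.cos θ) :
    ‖1 + (1:ℝ) * Complex.exp ((2*θ:ℝ) * Complex.I)‖ = 2 * Real.cos θ := by
  rw [Complex.norm_def, normSq_one_add]
  have h : 1 + 2*1*Real.cos (2*θ) + (1:ℝ)^2 = (2*Real.cos θ)^2 := by
    rw [Real.cos_two_mul]; ring
  rw [h, Real.sqrt_sq (by linarith)]

lemma abs_log_abs_le {r θ : ℝ} (hr0 : 0 ≤ r) (hr1 : r ≤ 1) (hθ : θ ∈ Set.Ioc (0:ℝ) (π/3)) :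
    |Real.log (‖1 + (r:ℂ) * Complex.exp ((2*θ:ℝ) * Complex.I)‖)| ≤ Real.log 2 := by
  set x := ‖1 + (r:ℂ) * Complex.exp ((2*θ:ℝ) * Complex.I)‖ with hx
  have hx0 : 0 ≤ x := norm_nonneg _
  have hxsq : x^2 = 1 + 2*r*Real.cos (2*θ) + r^2 := by
    rw [hx, Complex.sq_norm, normSq_one_add]
  have hcos : -(1/2) ≤ Real.cos (2*θ) := by
    have h := Real.cos_le_cos_of_nonneg_of_le_pi (by linarith [hθ.1] : (0:ℝ) ≤ 2*θ)
      (by linarith [Real.pi_pos] : 2*(π/3) ≤ π) (by linarith [hθ.2] : 2*θ ≤ 2*(π/3))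
    have h2 : Real.cos (2*(π/3)) = -(1/2) := by
      rw [show 2*(π/3) = π - π/3 by ring, Real.cos_pi_sub, Real.cos_pi_div_three]
    linarith [h, h2.symm ▸ h]
  have hup : x ≤ 2 := by nlinarith [Real.cos_le_one (2*θ)]
  have hlo : 1/2 ≤ x := by nlinarith
  have hxpos : 0 < x := by linarith
  rw [abs_le]
  constructor
  · rw [← Real.log_inv]
    exact Real.log_le_log (by norm_num) (by linarith)
  · exact Real.log_le_log hxpos hup

lemma K_val : (∫ θ in (0:ℝ)..(π/3), Real.log (2*Real.cos θ))
    = ∑' k : ℕ, (-1:ℝ)^(k+1) * Real.sin (2*k*π/3) / (2*(k:ℝ)^2) := by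
  set l : Filter ℝ := nhdsWithin 1 (Set.Iio 1) with hl
  have hmem : Set.Ioo (0:ℝ) 1 ∈ l := Ioo_mem_nhdsLT_of_mem (by norm_num)
  have hle : (0:ℝ) ≤ π/3 := by positivity
  have huIoc : Set.uIoc (0:ℝ) (π/3) = Set.Ioc 0 (π/3) := Set.uIoc_of_le hle
  -- LHS limit
  have h1 : Tendsto (fun r : ℝ => ∫ θ in (0:ℝ)..(π/3),
      Real.log (‖1 + (r:ℂ) * Complex.exp ((2*θ:ℝ) * Complex.I)‖)) l
      (nhds (∫ θ in (0:ℝ)..(π/3), Real.log (2*Real.cos θ))) := by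
    apply intervalIntegral.tendsto_integral_filter_of_dominated_convergence
      (bound := fun _ => Real.log 2)
    · apply Filter.Eventually.of_forall
      intro r
      have hc : Continuous (fun θ : ℝ => ‖1 + (r:ℂ) * Complex.exp ((2*θ:ℝ) * Complex.I)‖) := by
        apply continuous_norm.comp
        continuity
      exact (Real.measurable_log.comp hc.measurable).aestronglyMeasurable.restrict
    · filter_upwards [hmem] with r hr
      apply Filter.Eventually.of_forall
      intro θ hθ
      rw [huIoc] at hθ
      exact abs_log_abs_le hr.1.le hr.2.le hθ
    · exact intervalIntegrable_const
    · apply Filter.Eventually.of_forall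
      intro θ hθ
      rw [huIoc] at hθ
      have hcosθ : (1:ℝ)/2 ≤ Real.cos θ := by
        have h := Real.cos_le_cos_of_nonneg_of_le_pi hθ.1.le
          (by linarith [Real.pi_pos] : π/3 ≤ π) hθ.2
        rwa [Real.cos_pi_div_three] at h
      have habs1 : ‖1 + ((1:ℝ):ℂ) * Complex.exp ((2*θ:ℝ) * Complex.I)‖
          = 2 * Real.cos θ := abs_one_add_exp (by linarith)
      have hc2 : ContinuousAt (fun r : ℝ =>
          ‖1 + (r:ℂ) * Complex.exp ((2*θ:ℝ) * Complex.I)‖) 1 := by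
        apply Continuous.continuousAt
        apply continuous_norm.comp
        continuity
      have hne : ‖1 + ((1:ℝ):ℂ) * Complex.exp ((2*θ:ℝ) * Complex.I)‖ ≠ 0 := by
        rw [habs1]; positivity
      have hca : ContinuousAt (fun r : ℝ =>
          Real.log (‖1 + (r:ℂ) * Complex.exp ((2*θ:ℝ) * Complex.I)‖)) 1 :=
        ContinuousAt.log hc2 hne
      have := hca.tendsto
      rw [habs1] at this
      exact this.mono_left nhdsWithin_le_nhds
  -- RHS limit
  have h2 : Tendsto (fun r : ℝ => ∑' k : ℕ, (-1:ℝ)^(k+1) * r^k * Real.sin (2*k*π/3) / (2*(k:ℝ)^2)) l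
      (nhds (∑' k : ℕ, (-1:ℝ)^(k+1) * Real.sin (2*k*π/3) / (2*(k:ℝ)^2))) := by
    apply tendsto_tsum_of_dominated_convergence (bound := fun k : ℕ => ((k:ℝ)^2)⁻¹) summable_inv_sq_s17
    · intro k
      have hc : Continuous (fun r : ℝ => (-1:ℝ)^(k+1) * r^k * Real.sin (2*k*π/3) / (2*(k:ℝ)^2)) := by
        continuity
      have := hc.continuousAt (x := (1:ℝ)).tendsto
      simp only [one_pow, mul_one] at this
      exact this.mono_left nhdsWithin_le_nhds
    · filter_upwards [hmem] with r hr
      intro k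
      rcases Nat.eq_zero_or_pos k with rfl | hk
      · simp
      have hk2 : (0:ℝ) < (k:ℝ)^2 := by positivity
      simp only [Real.norm_eq_abs, abs_div, abs_mul, abs_pow, abs_neg, abs_one, one_pow, one_mul,
        Nat.abs_cast, abs_two]
      have h1 : |r|^k ≤ 1 := pow_le_one₀ (abs_nonneg r) (by rw [abs_of_nonneg hr.1.le]; linarith [hr.2])
      calc |r|^k * |Real.sin (2*k*π/3)| / (2*(k:ℝ)^2)
          ≤ 1 * 1 / (2*(k:ℝ)^2) := by
            apply div_le_div₀ (by norm_num) _ (by positivity) le_rfl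
            exact mul_le_mul h1 (Real.abs_sin_le_one _) (abs_nonneg _) zero_le_one
        _ ≤ ((k:ℝ)^2)⁻¹ := by
            rw [one_mul, div_eq_mul_inv, one_mul]
            apply inv_anti₀ hk2
            nlinarith
  -- combine
  have heq : ∀ᶠ r : ℝ in l, (∫ θ in (0:ℝ)..(π/3),
      Real.log (‖1 + (r:ℂ) * Complex.exp ((2*θ:ℝ) * Complex.I)‖))
      = ∑' k : ℕ, (-1:ℝ)^(k+1) * r^k * Real.sin (2*k*π/3) / (2*(k:ℝ)^2) := by
    filter_upwards [hmem] with r hr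
    exact integral_phi r hr.1.le hr.2
  have h1' := h1.congr' heq
  exact tendsto_nhds_unique h1' h2

/-- `∫₀^{π/3} cos²θ log(2 cos θ) dθ = (3√3/16) L(χ₋₃,2) + π/12 − √3/16`. -/
theorem integral_cos_sq_log :
    (∫ θ in (0 : ℝ)..(Real.pi / 3), Real.cos θ ^ 2 * Real.log (2 * Real.cos θ)) =
    (3 * Real.sqrt 3 / 16) *
        (∑' n : ℕ, (if n % 3 = 1 then (1 : ℝ) else if n % 3 = 2 then -1 else 0) / (n : ℝ) ^ 2)
      + Real.pi / 12 - Real.sqrt 3 / 16 := by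
  have hccpii : (∑' n : ℕ, (if n % 3 = 1 then (1 : ℝ) else if n % 3 = 2 then -1 else 0) / (n : ℝ) ^ 2)
      = ∑' n : ℕ, cc n / (n:ℝ)^2 := rfl
  rw [hccpii]
  -- split the integral
  have hlogcont : ContinuousOn (fun θ : ℝ => Real.log (2*Real.cos θ)) (Set.uIcc 0 (π/3)) := by
    apply ContinuousOn.log
    · exact Continuous.continuousOn (by continuity)
    · intro θ hθ; have := cos_ge_half hθ; positivity
  have hint1 : IntervalIntegrable (fun θ : ℝ => (Real.cos θ^2 - 1/2) * Real.log (2*Real.cos θ))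
      volume 0 (π/3) := by
    apply ContinuousOn.intervalIntegrable
    exact ContinuousOn.mul (Continuous.continuousOn (by continuity)) hlogcont
  have hint2 : IntervalIntegrable (fun θ : ℝ => (1/2 : ℝ) * Real.log (2*Real.cos θ))
      volume 0 (π/3) := by
    apply ContinuousOn.intervalIntegrable
    exact ContinuousOn.mul (Continuous.continuousOn (by continuity)) hlogcont
  have hsplit : (∫ θ in (0:ℝ)..(π/3), Real.cos θ ^ 2 * Real.log (2 * Real.cos θ))
      = (∫ θ in (0:ℝ)..(π/3), (Real.cos θ^2 - 1/2) * Real.log (2*Real.cos θ))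
        + ∫ θ in (0:ℝ)..(π/3), (1/2 : ℝ) * Real.log (2*Real.cos θ) := by
    rw [← intervalIntegral.integral_add hint1 hint2]
    apply intervalIntegral.integral_congr
    intro θ _
    ring
  rw [hsplit, elem_part, intervalIntegral.integral_const_mul, K_val]
  -- evaluate the series
  have hterm : ∀ k : ℕ, (-1:ℝ)^(k+1) * Real.sin (2*k*π/3) / (2*(k:ℝ)^2)
      = (Real.sqrt 3/4) * ((-1:ℝ)^(k+1) * (cc k/(k:ℝ)^2)) := by
    intro k
    rw [sin_two_k_pi_div_three]
    ring
  rw [tsum_congr hterm, tsum_mul_left, alt_sum_eq]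
  ring
end

section
/- For every integer j ≥ 1, ∫_{0}^{1} ( 2ρ/(1+ρ²) )^{2j+1} ρ dρ = −2/(2j−1) + ((2j+1)π / (4^j · j)) · C(2j−2, j−1), where C(n,k) denotes the binomial coefficient. -/
/-!
The substitution `ρ = tan (θ / 2)` turns `2ρ / (1 + ρ²)` into `sin θ` and `ρ dρ` into
`(1 - cos θ) / sin θ · dθ / (1 + cos θ)`, so the integral becomes
`∫₀^{π/2} sin^{2j-2} θ (1 - cos θ)² dθ`. Expanding the square with `cos² = 1 - sin²` leaves two
Wallis integrals `∫₀^{π/2} sin^{2m} = (π/2) C(2m, m) / 4^m` and `∫₀^{π/2} sin^{2j-2} cos = 1/(2j-1)`.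
-/

open Real intervalIntegral Set Nat

theorem centralBinom_succ_eq (n : ℕ) :
    (centralBinom (n + 1) : ℝ) = 2 * (2 * n + 1) * centralBinom n / (n + 1) := by
  rw [eq_div_iff (by positivity), mul_comm]
  exact_mod_cast succ_mul_centralBinom_succ n

theorem integral_sin_pow_even_zero_pi_div_two (n : ℕ) :
    ∫ x in (0 : ℝ)..π / 2, sin x ^ (2 * n) = π / 2 * centralBinom n / 4 ^ n := by
  induction n with
  | zero => simp
  | succ k ih =>
    rw [mul_add_one, integral_sin_pow, ih]
    simp only [sin_zero, cos_pi_div_two, zero_pow (succ_ne_zero _), zero_mul, mul_zero, sub_self,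
      zero_div, zero_add]
    push_cast
    rw [centralBinom_succ_eq]
    field_simp
    ring

theorem integral_sin_pow_mul_cos_zero_pi_div_two (m : ℕ) :
    ∫ x in (0 : ℝ)..π / 2, sin x ^ m * cos x = 1 / (m + 1) := by
  simpa using integral_sin_pow_mul_cos_pow_odd (a := 0) (b := π / 2) m 0

theorem integral_sin_pow_mul_one_sub_cos_sq (n : ℕ) :
    ∫ x in (0 : ℝ)..π / 2, sin x ^ (2 * n) * (1 - cos x) ^ 2 =
      π * centralBinom n / 4 ^ n - 2 / (2 * n + 1) - π / 2 * centralBinom (n + 1) / 4 ^ (n + 1) := by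
  have hexpand : ∀ x : ℝ, sin x ^ (2 * n) * (1 - cos x) ^ 2 =
      2 * sin x ^ (2 * n) - 2 * (sin x ^ (2 * n) * cos x) - sin x ^ (2 * (n + 1)) := by
    intro x
    rw [mul_add_one, pow_add]
    linear_combination sin x ^ (2 * n) * sin_sq_add_cos_sq x
  have hint : ∀ f : ℝ → ℝ, Continuous f → IntervalIntegrable f MeasureTheory.volume 0 (π / 2) :=
    fun f hf => hf.intervalIntegrable _ _
  simp_rw [hexpand]
  rw [integral_sub (hint _ (by fun_prop)) (hint _ (by fun_prop)),
    integral_sub (hint _ (by fun_prop)) (hint _ (by fun_prop)), integral_const_mul,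
    integral_const_mul, integral_sin_pow_even_zero_pi_div_two,
    integral_sin_pow_even_zero_pi_div_two, integral_sin_pow_mul_cos_zero_pi_div_two]
  push_cast
  ring

theorem cos_half_pos_of_mem_uIcc {θ : ℝ} (hθ : θ ∈ uIcc 0 (π / 2)) : 0 < cos (θ / 2) := by
  rw [uIcc_of_le (by positivity)] at hθ
  exact cos_pos_of_mem_Ioo ⟨by linarith [hθ.1, pi_pos], by linarith [hθ.2, pi_pos]⟩

theorem one_add_cos_eq_two_mul_cos_half_sq (θ : ℝ) : 1 + cos θ = 2 * cos (θ / 2) ^ 2 := by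
  rw [cos_sq, mul_div_cancel₀ _ two_ne_zero]
  ring

theorem sin_mul_tan_half {θ : ℝ} (h : cos (θ / 2) ≠ 0) : sin θ * tan (θ / 2) = 1 - cos θ := by
  have hsin : sin θ = 2 * sin (θ / 2) * cos (θ / 2) := by
    rw [← sin_two_mul, mul_div_cancel₀ _ two_ne_zero]
  rw [hsin, tan_eq_sin_div_cos, show 1 - cos θ = 2 - (1 + cos θ) by ring,
    one_add_cos_eq_two_mul_cos_half_sq]
  field_simp
  linear_combination sin_sq_add_cos_sq (θ / 2)

theorem sin_pow_mul_tan_half_div_one_add_cos (m : ℕ) {θ : ℝ} (h : cos (θ / 2) ≠ 0) :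
    sin θ ^ (m + 3) * tan (θ / 2) / (1 + cos θ) = sin θ ^ m * (1 - cos θ) ^ 2 := by
  have h₁ : 1 + cos θ ≠ 0 := by
    rw [one_add_cos_eq_two_mul_cos_half_sq]
    positivity
  rw [pow_succ, mul_assoc, sin_mul_tan_half h, pow_add, sin_sq]
  field_simp
  ring

theorem integral_zero_one_eq_integral_tan_half {f : ℝ → ℝ} (hf : Continuous f) :
    ∫ ρ in (0 : ℝ)..1, f ρ = ∫ θ in (0 : ℝ)..π / 2, f (tan (θ / 2)) / (1 + cos θ) := by
  have hderiv : ∀ θ ∈ uIcc 0 (π / 2), HasDerivAt (fun θ => tan (θ / 2)) (1 / (1 + cos θ)) θ := by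
    intro θ hθ
    refine ((hasDerivAt_tan (cos_half_pos_of_mem_uIcc hθ).ne').comp θ
      ((hasDerivAt_id θ).div_const 2)).congr_deriv ?_
    rw [one_add_cos_eq_two_mul_cos_half_sq]
    field_simp
  have hcont : ContinuousOn (fun θ => 1 / (1 + cos θ)) (uIcc 0 (π / 2)) := by
    refine continuousOn_const.div (by fun_prop) fun θ hθ => ?_
    rw [one_add_cos_eq_two_mul_cos_half_sq]
    exact (mul_pos two_pos (pow_pos (cos_half_pos_of_mem_uIcc hθ) 2)).ne'
  have := integral_comp_mul_deriv hderiv hcont hf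
  simp only [Function.comp_apply, zero_div, tan_zero, div_div, mul_one_div] at this
  rw [this, show π / (2 * 2) = π / 4 by ring, tan_pi_div_four]

/-- For `j ≥ 1`,
`∫₀¹ (2ρ/(1+ρ²))^{2j+1} ρ dρ = −2/(2j−1) + ((2j+1)π/(4^j j)) C(2j−2, j−1)`. -/
theorem integral_rho_power (j : ℕ) (hj : 1 ≤ j) :
    (∫ ρ in (0 : ℝ)..1, (2 * ρ / (1 + ρ ^ 2)) ^ (2 * j + 1) * ρ) =
    -2 / (2 * (j : ℝ) - 1)
      + ((2 * (j : ℝ) + 1) * Real.pi / (4 ^ j * (j : ℝ))) * ((2 * j - 2).choose (j - 1) : ℝ) := by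
  obtain ⟨n, rfl⟩ : ∃ n, j = n + 1 := ⟨j - 1, by omega⟩
  have hcont : Continuous fun ρ : ℝ => (2 * ρ / (1 + ρ ^ 2)) ^ (2 * n + 3) * ρ := by
    fun_prop (disch := intros; positivity)
  have hsubst : EqOn (fun θ => (2 * tan (θ / 2) / (1 + tan (θ / 2) ^ 2)) ^ (2 * n + 3)
      * tan (θ / 2) / (1 + cos θ)) (fun θ => sin θ ^ (2 * n) * (1 - cos θ) ^ 2) (uIcc 0 (π / 2)) := by
    intro θ hθ
    dsimp only
    rw [← sin_eq_two_mul_tan_half_div_one_add_tan_half_sq]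
    exact sin_pow_mul_tan_half_div_one_add_cos _ (cos_half_pos_of_mem_uIcc hθ).ne'
  rw [show 2 * (n + 1) + 1 = 2 * n + 3 by ring, integral_zero_one_eq_integral_tan_half hcont,
    integral_congr hsubst, integral_sin_pow_mul_one_sub_cos_sq,
    show 2 * (n + 1) - 2 = 2 * n by omega, add_tsub_cancel_right, ← centralBinom_eq_two_mul_choose]
  push_cast
  rw [show 2 * ((n : ℝ) + 1) - 1 = 2 * n + 1 by ring, centralBinom_succ_eq]
  field_simp
  ring
end
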